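/- arXiv:2303.00695 — 5 statements merged into one kernel-verified Lean document; each statement's English description precedes it below -/
import Mathlib

section
/- Let (N,v) be a zero-normalized symmetric convex game and let (N_k, E_k^C) be a chain (path graph) with n_k nodes for k = 1,2. If n_1 < n_2, then the position value of an end node of the shorter chain is at most that of an end node of the longer chain: π_1(N_1, v, E_1^C) ≤ π_1(N_2, v, E_2^C). -/
open scoped Classical

noncomputable section

variable {V : Type*} [Fintype V] [DecidableEq V]

/-- The vertex set of the connected component of `i` in the graph with edge set `L`. -/
def comp (L : Finset (Sym2 V)) (i : V) : Finset V :=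
  Finset.univ.filter fun j =>
    (SimpleGraph.fromEdgeSet (↑L : Set (Sym2 V))).Reachable i j

/-- Nodes covered by the edge set `L` (the node set `N[L]`). -/
def covered (L : Finset (Sym2 V)) : Finset V :=
  Finset.univ.filter fun i => ∃ e ∈ L, i ∈ e

/-- The collection of (vertex sets of) connected components of the edge-induced
subgraph `Γ_L = (N[L], L)`. -/
def comps (L : Finset (Sym2 V)) : Finset (Finset V) :=
  (covered L).image (comp L)

/-- The link game `w^v` associated with the game `v` and an edge set. -/
def linkGame (v : Finset V → ℝ) (L : Finset (Sym2 V)) : ℝ :=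
  ∑ C ∈ comps L, v C

/-- Shapley value of player `e` in the game `w` with player set `E`. -/
def shapley {α : Type*} [DecidableEq α] (E : Finset α) (w : Finset α → ℝ) (e : α) : ℝ :=
  ∑ L ∈ (E.erase e).powerset,
    ((L.card.factorial : ℝ) * ((E.card - L.card - 1).factorial : ℝ) / (E.card.factorial : ℝ)) *
      (w (insert e L) - w L)

/-- Harsanyi dividend of coalition `L` in the game `w`. -/
def dividend {α : Type*} [DecidableEq α] (w : Finset α → ℝ) (L : Finset α) : ℝ :=
  ∑ T ∈ L.powerset, (-1 : ℝ) ^ (L.card - T.card) * w T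

/-- The position value of node `i` in the communication situation `(N, v, E)`. -/
def positionValue (v : Finset V → ℝ) (E : Finset (Sym2 V)) (i : V) : ℝ :=
  (1 / 2) * ∑ e ∈ E.filter (fun e => i ∈ e), shapley E (linkGame v) e

def Superadditive (v : Finset V → ℝ) : Prop :=
  ∀ S T : Finset V, Disjoint S T → v S + v T ≤ v (S ∪ T)

def ConvexGame (v : Finset V → ℝ) : Prop :=
  ∀ S T : Finset V, v S + v T ≤ v (S ∪ T) + v (S ∩ T)

def ZeroNormalized (v : Finset V → ℝ) : Prop :=
  v ∅ = 0 ∧ ∀ i : V, v {i} = 0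

def SymmetricGame (v : Finset V → ℝ) (f : ℕ → ℝ) : Prop :=
  ∀ S : Finset V, v S = f S.card

/-- An edge set without loops. -/
def SimpleEdges (E : Finset (Sym2 V)) : Prop := ∀ e ∈ E, ¬ e.IsDiag

/-- The edge-induced subgraph `Γ_L = (N[L], L)` is connected. -/
def EdgeConnected (L : Finset (Sym2 V)) : Prop :=
  ∀ i ∈ covered L, ∀ j ∈ covered L,
    (SimpleGraph.fromEdgeSet (↑L : Set (Sym2 V))).Reachable i j

/-- Component of `i` in the subgraph of `Γ_L` induced on the vertex set `S`. -/
def compIn (L : Finset (Sym2 V)) (S : Finset V) (i : V) : Finset V :=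
  S.filter fun j =>
    (SimpleGraph.fromEdgeSet
      (↑(L.filter fun e => ∀ x ∈ e, x ∈ S) : Set (Sym2 V))).Reachable i j

/-- Number of connected components of the subgraph of `Γ_L` induced on `S`. -/
def numCompsIn (L : Finset (Sym2 V)) (S : Finset V) : ℕ :=
  (S.image (compIn L S)).card

/-- A cutvertex of `Γ_L`: a vertex whose removal increases the number of components. -/
def IsCutvertex (L : Finset (Sym2 V)) (i : V) : Prop :=
  i ∈ covered L ∧ numCompsIn L (covered L) < numCompsIn L ((covered L).erase i)

/-- The set of cutedges of `L`: edges both of whose endpoints are cutvertices. -/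
def cutedges (L : Finset (Sym2 V)) : Finset (Sym2 V) :=
  L.filter fun e => ∀ x ∈ e, IsCutvertex L x

/-- The attachment game `v_a(S) = 2(|S| - 1)` (and `v_a(∅) = 0`). -/
def va : Finset V → ℝ := fun S => if S = ∅ then 0 else 2 * ((S.card : ℝ) - 1)

/-- The star on `V` with hub `c`: all (non-loop) edges incident to `c`. -/
def starEdges (c : V) : Finset (Sym2 V) :=
  Finset.univ.filter fun e => ¬ e.IsDiag ∧ c ∈ e

/-- The chain (path) on `Fin n`, with edges `{i, i+1}`. -/
def chainEdges (n : ℕ) : Finset (Sym2 (Fin n)) :=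
  Finset.univ.filter fun e => ∃ i j : Fin n, e = s(i, j) ∧ (j : ℕ) = (i : ℕ) + 1

/-- `F(s, r) = ∑_{k=0}^{r} (-1)^k C(r,k) f(s-k)` for `f : ℕ → ℝ`. -/
def Ffun (f : ℕ → ℝ) (s r : ℕ) : ℝ :=
  ∑ k ∈ Finset.range (r + 1), (-1 : ℝ) ^ k * (r.choose k : ℝ) * f (s - k)

/-- `F(s, r) = ∑_{k=0}^{r} (-1)^k C(r,k) f(s-k)` for `f : ℝ → ℝ`. -/
def FfunR (f : ℝ → ℝ) (s r : ℕ) : ℝ :=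
  ∑ k ∈ Finset.range (r + 1), (-1 : ℝ) ^ k * (r.choose k : ℝ) * f ((s : ℝ) - (k : ℝ))


/-! ### Auxiliary development for STATEMENT 8 -/

namespace ChainAux

open Finset SimpleGraph

section Graphs

variable {V : Type*} [Fintype V] [DecidableEq V]

lemma mem_comp {L : Finset (Sym2 V)} {i j : V} :
    j ∈ comp L i ↔ (fromEdgeSet (↑L : Set (Sym2 V))).Reachable i j := by
  simp [comp]

lemma mem_covered {L : Finset (Sym2 V)} {x : V} :
    x ∈ covered L ↔ ∃ e ∈ L, x ∈ e := by simp [covered]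

lemma adj_iff {L : Finset (Sym2 V)} {x y : V} :
    (fromEdgeSet (↑L : Set (Sym2 V))).Adj x y ↔ s(x, y) ∈ L ∧ x ≠ y := by
  rw [SimpleGraph.fromEdgeSet_adj]; simp

lemma walk_closed {L : Finset (Sym2 V)} {S : Finset V}
    (hS : ∀ x y : V, (fromEdgeSet (↑L : Set (Sym2 V))).Adj x y → x ∈ S → y ∈ S) :
    ∀ {i j : V}, (fromEdgeSet (↑L : Set (Sym2 V))).Walk i j → i ∈ S → j ∈ S := by
  intro i j w
  induction w with
  | nil => exact fun h => h
  | cons h p ih => exact fun hi => ih (hS _ _ h hi)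

lemma reach_closed {L : Finset (Sym2 V)} {S : Finset V}
    (hS : ∀ x y : V, (fromEdgeSet (↑L : Set (Sym2 V))).Adj x y → x ∈ S → y ∈ S)
    {i j : V} (hi : i ∈ S) (h : (fromEdgeSet (↑L : Set (Sym2 V))).Reachable i j) :
    j ∈ S := by
  obtain ⟨w⟩ := h; exact walk_closed hS w hi

lemma mem_covered_of_adj {L : Finset (Sym2 V)} {x y : V}
    (h : (fromEdgeSet (↑L : Set (Sym2 V))).Adj x y) : x ∈ covered L := by
  rw [adj_iff] at h
  exact mem_covered.2 ⟨s(x, y), h.1, by simp⟩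

lemma comp_subset_covered {L : Finset (Sym2 V)} {i : V} (hi : i ∈ covered L) :
    comp L i ⊆ covered L := by
  intro j hj
  exact reach_closed (fun x y h _ => mem_covered_of_adj h.symm) hi (mem_comp.1 hj)

lemma mem_comp_self {L : Finset (Sym2 V)} {i : V} : i ∈ comp L i :=
  mem_comp.2 (SimpleGraph.Reachable.refl i)

lemma comp_eq_of_reachable {L : Finset (Sym2 V)} {i j : V}
    (h : (fromEdgeSet (↑L : Set (Sym2 V))).Reachable i j) : comp L i = comp L j := by
  ext x
  rw [mem_comp, mem_comp]
  exact ⟨fun hx => h.symm.trans hx, fun hx => h.trans hx⟩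

lemma comp_mono {L L' : Finset (Sym2 V)} (h : L ⊆ L') {i : V} :
    comp L i ⊆ comp L' i := by
  intro x hx
  rw [mem_comp] at hx ⊢
  exact hx.mono (SimpleGraph.fromEdgeSet_mono (by exact_mod_cast h))

lemma covered_insert {L : Finset (Sym2 V)} {x y : V} :
    covered (insert s(x, y) L) = insert x (insert y (covered L)) := by
  ext z
  rw [mem_covered, mem_insert, mem_insert, mem_covered]
  constructor
  · rintro ⟨e, he, hz⟩
    rcases Finset.mem_insert.1 he with rfl | he
    · rcases Sym2.mem_iff.1 hz with rfl | rfl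
      · exact Or.inl rfl
      · exact Or.inr (Or.inl rfl)
    · exact Or.inr (Or.inr ⟨e, he, hz⟩)
  · rintro (rfl | rfl | ⟨e, he, hz⟩)
    · exact ⟨s(z, y), Finset.mem_insert_self _ _, by simp⟩
    · exact ⟨s(x, z), Finset.mem_insert_self _ _, by simp⟩
    · exact ⟨e, Finset.mem_insert_of_mem he, hz⟩

lemma mem_comps {L : Finset (Sym2 V)} {C : Finset V} :
    C ∈ comps L ↔ ∃ j ∈ covered L, comp L j = C := by simp [comps]

end Graphs

/-! ### The chain -/

def vtx (m k : ℕ) : Fin (m + 1) := ⟨k % (m + 1), Nat.mod_lt _ m.succ_pos⟩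

lemma vtx_val {m k : ℕ} (h : k ≤ m) : (vtx m k).val = k := Nat.mod_eq_of_lt (by omega)

def ed (m k : ℕ) : Sym2 (Fin (m + 1)) := s(vtx m k, vtx m (k + 1))

lemma vtx_inj {m k l : ℕ} (hk : k ≤ m) (hl : l ≤ m) (h : vtx m k = vtx m l) : k = l := by
  have := congrArg Fin.val h
  rwa [vtx_val hk, vtx_val hl] at this

lemma mem_ed {m k : ℕ} {x : Fin (m + 1)} :
    x ∈ ed m k ↔ x = vtx m k ∨ x = vtx m (k + 1) := Sym2.mem_iff

lemma ed_ne {m a b : ℕ} (ha : a < m) (hb : b < m) (h : ed m a = ed m b) : a = b := by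
  rw [ed, ed, Sym2.eq_iff] at h
  rcases h with ⟨h1, _⟩ | ⟨h1, h2⟩
  · exact vtx_inj (by omega) (by omega) h1
  · have e1 := vtx_inj (by omega) (by omega) h1
    have e2 := vtx_inj (by omega) (by omega) h2
    omega

lemma chainEdges_eq (m : ℕ) : chainEdges (m + 1) = (range m).image (ed m) := by
  ext e
  simp only [chainEdges, mem_filter, mem_univ, true_and, mem_image, mem_range]
  constructor
  · rintro ⟨i, j, rfl, hj⟩
    have hi : i.val < m := by have := j.isLt; omega
    refine ⟨i.val, hi, ?_⟩
    have h1 : vtx m i.val = i := Fin.ext (vtx_val (by omega))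
    have h2 : vtx m (i.val + 1) = j := Fin.ext (by rw [vtx_val (by omega)]; omega)
    rw [ed, h1, h2]
  · rintro ⟨k, hk, rfl⟩
    exact ⟨vtx m k, vtx m (k + 1), rfl, by rw [vtx_val (by omega), vtx_val (by omega)]⟩

lemma card_chainEdges (m : ℕ) : (chainEdges (m + 1)).card = m := by
  rw [chainEdges_eq, Finset.card_image_of_injOn, card_range]
  intro a ha b hb h
  exact ed_ne (mem_range.1 ha) (mem_range.1 hb) h

def Cset (m lo hi : ℕ) : Finset (Fin (m + 1)) :=
  univ.filter fun x => lo ≤ x.val ∧ x.val ≤ hi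

lemma mem_Cset {m lo hi : ℕ} {x : Fin (m + 1)} :
    x ∈ Cset m lo hi ↔ lo ≤ x.val ∧ x.val ≤ hi := by simp [Cset]

lemma card_Cset {m lo hi : ℕ} (hlo : lo ≤ hi) (hhi : hi ≤ m) :
    (Cset m lo hi).card = hi + 1 - lo := by
  have himg : Cset m lo hi = (Icc lo hi).image (vtx m) := by
    ext x
    rw [mem_Cset, mem_image]
    constructor
    · rintro ⟨h1, h2⟩
      exact ⟨x.val, mem_Icc.2 ⟨h1, h2⟩, Fin.ext (vtx_val (by omega))⟩
    · rintro ⟨k, hk, rfl⟩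
      rw [mem_Icc] at hk
      rw [vtx_val (by omega)]
      exact hk
  rw [himg, Finset.card_image_of_injOn, Nat.card_Icc]
  intro a ha b hb h
  rw [Finset.coe_Icc, Set.mem_Icc] at ha hb
  exact vtx_inj (by omega) (by omega) h

/-! ### Runs -/

def runLen (m : ℕ) (A : Finset ℕ) : ℕ := Nat.findGreatest (fun t => Icc 1 t ⊆ A) (m - 1)

lemma runLen_subset {m : ℕ} {A : Finset ℕ} : Icc 1 (runLen m A) ⊆ A := by
  unfold runLen
  refine Nat.findGreatest_spec (P := fun t => Icc 1 t ⊆ A) (Nat.zero_le _) ?_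
  show Icc 1 0 ⊆ A
  rw [show Finset.Icc 1 0 = ∅ from Finset.Icc_eq_empty (by omega)]
  exact Finset.empty_subset A

lemma runLen_le {m : ℕ} {A : Finset ℕ} : runLen m A ≤ m - 1 := Nat.findGreatest_le _

lemma runLen_succ_not_mem {m : ℕ} {A : Finset ℕ} (hA : A ⊆ Icc 1 (m - 1)) :
    runLen m A + 1 ∉ A := by
  intro hmem
  have h1 : runLen m A + 1 ≤ m - 1 := (mem_Icc.1 (hA hmem)).2
  have h2 := Nat.findGreatest_is_greatest (P := fun t => Icc 1 t ⊆ A) (n := m - 1)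
    (Nat.lt_succ_self (runLen m A)) h1
  apply h2
  intro x hx
  rw [mem_Icc] at hx
  rcases Nat.lt_or_ge x (runLen m A + 1) with h | h
  · exact runLen_subset (m := m) (mem_Icc.2 ⟨hx.1, by omega⟩)
  · have hx2 : x = runLen m A + 1 := by omega
    rwa [hx2]

lemma runLen_eq_zero {m : ℕ} {A : Finset ℕ} (h1 : 1 ∉ A) : runLen m A = 0 := by
  rcases Nat.eq_zero_or_pos (runLen m A) with h | h
  · exact h
  · exact absurd (runLen_subset (m := m) (mem_Icc.2 ⟨le_refl 1, h⟩)) fun hc => h1 hc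


/-! ### Components of subsets of the chain -/

section Comps

variable {m : ℕ} {A : Finset ℕ}

lemma covered_L (hA : A ⊆ Icc 1 (m - 1)) {x : Fin (m + 1)} :
    x ∈ covered (A.image (ed m)) ↔ ∃ a ∈ A, x.val = a ∨ x.val = a + 1 := by
  rw [mem_covered]
  constructor
  · rintro ⟨e, he, hx⟩
    obtain ⟨a, ha, rfl⟩ := mem_image.1 he
    have hb := mem_Icc.1 (hA ha)
    rw [mem_ed] at hx
    refine ⟨a, ha, ?_⟩
    rcases hx with rfl | rfl
    · left; exact vtx_val (by omega)
    · right; exact vtx_val (by omega)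
  · rintro ⟨a, ha, hx⟩
    have hb := mem_Icc.1 (hA ha)
    refine ⟨ed m a, mem_image_of_mem _ ha, ?_⟩
    rw [mem_ed]
    rcases hx with h | h
    · left; exact Fin.ext (by rw [vtx_val (by omega)]; omega)
    · right; exact Fin.ext (by rw [vtx_val (by omega)]; omega)

lemma vtx0_not_covered (hA : A ⊆ Icc 1 (m - 1)) :
    vtx m 0 ∉ covered (A.image (ed m)) := by
  rw [covered_L hA]
  rintro ⟨a, ha, h⟩
  have hb := mem_Icc.1 (hA ha)
  rw [vtx_val (Nat.zero_le m)] at h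
  omega

lemma comp_one (hA : A ⊆ Icc 1 (m - 1)) (hm : 1 ≤ m) :
    comp (A.image (ed m)) (vtx m 1) = Cset m 1 (runLen m A + 1) := by
  have htle : runLen m A ≤ m - 1 := runLen_le
  have htnot : runLen m A + 1 ∉ A := runLen_succ_not_mem hA
  apply Finset.Subset.antisymm
  · intro j hj
    rw [mem_comp] at hj
    refine reach_closed ?_ ?_ hj
    · intro x y hadj hx
      rw [adj_iff] at hadj
      obtain ⟨he, hne⟩ := hadj
      obtain ⟨a, ha, hea⟩ := mem_image.1 he
      have hb := mem_Icc.1 (hA ha)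
      have hxe : x ∈ ed m a := by rw [hea]; rw [Sym2.mem_iff]; left; rfl
      have hye : y ∈ ed m a := by rw [hea]; rw [Sym2.mem_iff]; right; rfl
      rw [mem_ed] at hxe hye
      have hxv : x.val = a ∨ x.val = a + 1 := by
        rcases hxe with rfl | rfl
        · left; exact vtx_val (by omega)
        · right; exact vtx_val (by omega)
      have hyv : y.val = a ∨ y.val = a + 1 := by
        rcases hye with rfl | rfl
        · left; exact vtx_val (by omega)
        · right; exact vtx_val (by omega)
      rw [mem_Cset] at hx ⊢
      have hat : a ≠ runLen m A + 1 := fun h => htnot (h ▸ ha)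
      omega
    · rw [mem_Cset, vtx_val hm]; omega
  · have reach : ∀ d : ℕ, 1 + d ≤ runLen m A + 1 →
        (fromEdgeSet (↑(A.image (ed m)) : Set (Sym2 (Fin (m+1))))).Reachable
          (vtx m 1) (vtx m (1 + d)) := by
      intro d
      induction d with
      | zero => exact fun _ => SimpleGraph.Reachable.refl _
      | succ d ih =>
        intro hd
        have h1 : (1 + d) ∈ A := runLen_subset (m := m) (mem_Icc.2 ⟨by omega, by omega⟩)
        have hadj : (fromEdgeSet (↑(A.image (ed m)) : Set (Sym2 (Fin (m+1))))).Adj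
            (vtx m (1 + d)) (vtx m (1 + (d + 1))) := by
          rw [adj_iff]
          constructor
          · have hrw : s(vtx m (1 + d), vtx m (1 + (d + 1))) = ed m (1 + d) := rfl
            rw [hrw]
            exact mem_image_of_mem _ h1
          · intro hcon
            have := vtx_inj (by omega) (by omega) hcon
            omega
        exact (ih (by omega)).trans hadj.reachable
    intro x hx
    rw [mem_Cset] at hx
    rw [mem_comp]
    have hxv : x = vtx m (1 + (x.val - 1)) := Fin.ext (by rw [vtx_val (by omega)]; omega)
    have := reach (x.val - 1) (by omega)
    rwa [← hxv] at this

lemma comp_zero (hA : A ⊆ Icc 1 (m - 1)) (hm : 1 ≤ m) :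
    comp (insert (ed m 0) (A.image (ed m))) (vtx m 0) = Cset m 0 (runLen m A + 1) := by
  have htle : runLen m A ≤ m - 1 := runLen_le
  have htnot : runLen m A + 1 ∉ A := runLen_succ_not_mem hA
  apply Finset.Subset.antisymm
  · intro j hj
    rw [mem_comp] at hj
    refine reach_closed ?_ ?_ hj
    · intro x y hadj hx
      rw [adj_iff] at hadj
      obtain ⟨he, hne⟩ := hadj
      rcases Finset.mem_insert.1 he with h0 | hL
      · have hxe : x ∈ ed m 0 := by rw [← h0]; rw [Sym2.mem_iff]; left; rfl
        have hye : y ∈ ed m 0 := by rw [← h0]; rw [Sym2.mem_iff]; right; rfl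
        rw [mem_ed] at hxe hye
        have hyv : y.val = 0 ∨ y.val = 1 := by
          rcases hye with rfl | rfl
          · left; exact vtx_val (by omega)
          · right; exact vtx_val (by omega)
        rw [mem_Cset]
        omega
      · obtain ⟨a, ha, hea⟩ := mem_image.1 hL
        have hb := mem_Icc.1 (hA ha)
        have hxe : x ∈ ed m a := by rw [hea]; rw [Sym2.mem_iff]; left; rfl
        have hye : y ∈ ed m a := by rw [hea]; rw [Sym2.mem_iff]; right; rfl
        rw [mem_ed] at hxe hye
        have hxv : x.val = a ∨ x.val = a + 1 := by
          rcases hxe with rfl | rfl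
          · left; exact vtx_val (by omega)
          · right; exact vtx_val (by omega)
        have hyv : y.val = a ∨ y.val = a + 1 := by
          rcases hye with rfl | rfl
          · left; exact vtx_val (by omega)
          · right; exact vtx_val (by omega)
        rw [mem_Cset] at hx ⊢
        have hat : a ≠ runLen m A + 1 := fun h => htnot (h ▸ ha)
        omega
    · rw [mem_Cset, vtx_val (Nat.zero_le m)]; omega
  · intro x hx
    rw [mem_Cset] at hx
    rw [mem_comp]
    rcases Nat.eq_zero_or_pos x.val with h0 | h0
    · have : x = vtx m 0 := Fin.ext (by rw [vtx_val (Nat.zero_le m)]; omega)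
      rw [this]
    · have hx1 : x ∈ Cset m 1 (runLen m A + 1) := mem_Cset.2 ⟨h0, hx.2⟩
      rw [← comp_one hA hm, mem_comp] at hx1
      have hadj : (fromEdgeSet (↑(insert (ed m 0) (A.image (ed m))) :
          Set (Sym2 (Fin (m+1))))).Adj (vtx m 0) (vtx m 1) := by
        rw [adj_iff]
        refine ⟨Finset.mem_insert_self _ _, ?_⟩
        intro hcon
        have := vtx_inj (Nat.zero_le m) hm hcon
        omega
      refine hadj.reachable.trans (hx1.mono (SimpleGraph.fromEdgeSet_mono ?_))
      exact_mod_cast Finset.subset_insert _ _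

lemma comp_untouched (hA : A ⊆ Icc 1 (m - 1)) (hm : 1 ≤ m) {j : Fin (m + 1)}
    (hj : j ∈ covered (A.image (ed m))) (hjC : j ∉ Cset m 1 (runLen m A + 1)) :
    comp (insert (ed m 0) (A.image (ed m))) j = comp (A.image (ed m)) j := by
  apply Finset.Subset.antisymm
  · intro x hx
    rw [mem_comp] at hx
    refine reach_closed ?_ mem_comp_self hx
    intro x y hadj hxS
    rw [adj_iff] at hadj
    obtain ⟨he, hne⟩ := hadj
    rcases Finset.mem_insert.1 he with h0 | hL
    · exfalso
      have hxe : x ∈ ed m 0 := by rw [← h0]; rw [Sym2.mem_iff]; left; rfl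
      rw [mem_ed] at hxe
      rcases hxe with rfl | rfl
      · exact vtx0_not_covered hA (comp_subset_covered hj hxS)
      · have h1 : (fromEdgeSet (↑(A.image (ed m)) : Set (Sym2 (Fin (m+1))))).Reachable
            j (vtx m 1) := mem_comp.1 hxS
        have h2 : j ∈ comp (A.image (ed m)) (vtx m 1) := mem_comp.2 h1.symm
        rw [comp_one hA hm] at h2
        exact hjC h2
    · exact mem_comp.2 ((mem_comp.1 hxS).trans (adj_iff.2 ⟨hL, hne⟩).reachable)
  · exact comp_mono (Finset.subset_insert _ _)

lemma comps_insert (hA : A ⊆ Icc 1 (m - 1)) (hm : 1 ≤ m) :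
    comps (insert (ed m 0) (A.image (ed m))) =
      insert (Cset m 0 (runLen m A + 1))
        ((comps (A.image (ed m))).erase (Cset m 1 (runLen m A + 1))) := by
  have htle : runLen m A ≤ m - 1 := runLen_le
  have hC1C0 : Cset m 1 (runLen m A + 1) ⊆ Cset m 0 (runLen m A + 1) := by
    intro x hx
    rw [mem_Cset] at hx ⊢
    omega
  have hed0 : ed m 0 = s(vtx m 0, vtx m 1) := rfl
  have hcov' : covered (insert (ed m 0) (A.image (ed m))) =
      insert (vtx m 0) (insert (vtx m 1) (covered (A.image (ed m)))) := by
    rw [hed0]; exact covered_insert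
  ext X
  rw [Finset.mem_insert, Finset.mem_erase]
  constructor
  · intro hX
    obtain ⟨j, hj, rfl⟩ := mem_comps.1 hX
    by_cases hjC : j ∈ Cset m 0 (runLen m A + 1)
    · left
      have hj0 : j ∈ comp (insert (ed m 0) (A.image (ed m))) (vtx m 0) := by
        rw [comp_zero hA hm]; exact hjC
      rw [← comp_zero hA hm]
      exact (comp_eq_of_reachable (mem_comp.1 hj0)).symm
    · right
      have hj1 : j ∉ Cset m 1 (runLen m A + 1) := fun h => hjC (hC1C0 h)
      have hjcov : j ∈ covered (A.image (ed m)) := by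
        rw [hcov'] at hj
        rcases Finset.mem_insert.1 hj with rfl | hj
        · exact absurd (mem_Cset.2 ⟨Nat.zero_le _, by rw [vtx_val (Nat.zero_le m)]; omega⟩) hjC
        rcases Finset.mem_insert.1 hj with rfl | hj
        · exact absurd (mem_Cset.2 ⟨Nat.zero_le _, by rw [vtx_val hm]; omega⟩) hjC
        · exact hj
      rw [comp_untouched hA hm hjcov hj1]
      refine ⟨?_, mem_comps.2 ⟨j, hjcov, rfl⟩⟩
      intro hEq
      exact hj1 (hEq ▸ mem_comp_self)
  · rintro (rfl | ⟨hne, hX⟩)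
    · refine mem_comps.2 ⟨vtx m 0, ?_, comp_zero hA hm⟩
      rw [hcov']
      exact Finset.mem_insert_self _ _
    · obtain ⟨j, hj, rfl⟩ := mem_comps.1 hX
      have hj1 : j ∉ Cset m 1 (runLen m A + 1) := by
        intro h
        rw [← comp_one hA hm] at h
        exact hne ((comp_eq_of_reachable (mem_comp.1 h)).symm.trans (comp_one hA hm))
      refine mem_comps.2 ⟨j, ?_, comp_untouched hA hm hj hj1⟩
      rw [hcov']
      exact Finset.mem_insert_of_mem (Finset.mem_insert_of_mem hj)

end Comps

/-! ### The marginal contribution of the end edge -/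

lemma linkGame_insert {m : ℕ} (hm : 1 ≤ m) {A : Finset ℕ} (hA : A ⊆ Icc 1 (m - 1))
    (f : ℕ → ℝ) (hf1 : f 1 = 0) :
    linkGame (fun S : Finset (Fin (m + 1)) => f S.card) (insert (ed m 0) (A.image (ed m))) -
      linkGame (fun S : Finset (Fin (m + 1)) => f S.card) (A.image (ed m)) =
      f (runLen m A + 2) - f (runLen m A + 1) := by
  have htle : runLen m A ≤ m - 1 := runLen_le
  have hC0card : (Cset m 0 (runLen m A + 1)).card = runLen m A + 2 := by
    rw [card_Cset (Nat.zero_le _) (by omega)]; omega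
  have hC1card : (Cset m 1 (runLen m A + 1)).card = runLen m A + 1 := by
    rw [card_Cset (by omega) (by omega)]; omega
  simp only [linkGame]
  rw [comps_insert hA hm]
  have hC0notin : Cset m 0 (runLen m A + 1) ∉
      (comps (A.image (ed m))).erase (Cset m 1 (runLen m A + 1)) := by
    intro h
    have h2 := Finset.mem_of_mem_erase h
    obtain ⟨j, hj, hEq⟩ := mem_comps.1 h2
    have h3 : vtx m 0 ∈ comp (A.image (ed m)) j :=
      hEq ▸ (mem_Cset.2 ⟨Nat.zero_le _, by rw [vtx_val (Nat.zero_le m)]; omega⟩)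
    exact vtx0_not_covered hA (comp_subset_covered hj h3)
  rw [Finset.sum_insert hC0notin]
  by_cases h1 : 1 ∈ A
  · have hC1mem : Cset m 1 (runLen m A + 1) ∈ comps (A.image (ed m)) := by
      rw [← comp_one hA hm]
      refine mem_comps.2 ⟨vtx m 1, ?_, rfl⟩
      rw [covered_L hA]
      exact ⟨1, h1, Or.inl (vtx_val hm)⟩
    rw [Finset.sum_erase_eq_sub hC1mem, hC0card, hC1card]
    ring
  · have ht0 : runLen m A = 0 := runLen_eq_zero h1
    have hC1notin : Cset m 1 (runLen m A + 1) ∉ comps (A.image (ed m)) := by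
      intro h
      obtain ⟨j, hj, hEq⟩ := mem_comps.1 h
      have hjmem : j ∈ Cset m 1 (runLen m A + 1) := hEq ▸ mem_comp_self
      rw [mem_Cset, ht0] at hjmem
      obtain ⟨a, ha, hval⟩ := (covered_L hA).1 hj
      have hb := mem_Icc.1 (hA ha)
      have ha1 : a = 1 := by omega
      exact h1 (ha1 ▸ ha)
    rw [Finset.erase_eq_of_notMem hC1notin, hC0card, ht0, hf1]
    ring

/-! ### Arithmetic identities -/

lemma hockey (s J : ℕ) :
    ∑ j ∈ range (J + 1), (j + s).choose s = (s + J + 1).choose (s + 1) := by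
  have h := Nat.sum_Icc_choose (s + J) s
  rw [← h, ← Finset.Ico_add_one_right_eq_Icc, Finset.sum_Ico_eq_sum_range]
  have h2 : s + J + 1 - s = J + 1 := by omega
  rw [h2]
  exact Finset.sum_congr rfl fun j _ => by rw [Nat.add_comm s j]

lemma arith (s J : ℕ) :
    ∑ j ∈ range (J + 1), ((J.choose j : ℝ) *
      ((j + s).factorial * ((s + J + 1) - (j + s) - 1).factorial / (s + J + 1).factorial)) =
      1 / (s + 1) := by
  have hD : ((s + J + 1).factorial : ℝ) ≠ 0 := Nat.cast_ne_zero.2 (Nat.factorial_ne_zero _)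
  have hterm : ∀ j ∈ range (J + 1), (J.choose j : ℝ) *
      ((j + s).factorial * ((s + J + 1) - (j + s) - 1).factorial / (s + J + 1).factorial) =
      ((j + s).choose s : ℝ) * (J.factorial * s.factorial / (s + J + 1).factorial) := by
    intro j hj
    rw [mem_range] at hj
    have hsub : (s + J + 1) - (j + s) - 1 = J - j := by omega
    rw [hsub]
    have hnat : J.choose j * ((j + s).factorial * (J - j).factorial) * j.factorial =
        (j + s).choose s * (J.factorial * s.factorial) * j.factorial := by
      have h1 : J.choose j * j.factorial * (J - j).factorial = J.factorial :=
        Nat.choose_mul_factorial_mul_factorial (by omega)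
      have h2 : (j + s).choose s * s.factorial * (j + s - s).factorial =
          (j + s).factorial := Nat.choose_mul_factorial_mul_factorial (by omega)
      have h3 : j + s - s = j := by omega
      rw [h3] at h2
      calc J.choose j * ((j + s).factorial * (J - j).factorial) * j.factorial
          = (J.choose j * j.factorial * (J - j).factorial) * (j + s).factorial := by ring
        _ = J.factorial * (j + s).factorial := by rw [h1]
        _ = J.factorial * ((j + s).choose s * s.factorial * j.factorial) := by rw [h2]
        _ = (j + s).choose s * (J.factorial * s.factorial) * j.factorial := by ring
    have hreal : (J.choose j : ℝ) * ((j + s).factorial * (J - j).factorial) =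
        ((j + s).choose s : ℝ) * (J.factorial * s.factorial) := by
      have hc := congrArg (fun k : ℕ => (k : ℝ)) hnat
      push_cast at hc
      have hjf : (j.factorial : ℝ) ≠ 0 := Nat.cast_ne_zero.2 (Nat.factorial_ne_zero _)
      exact mul_right_cancel₀ hjf hc
    rw [mul_div_assoc', mul_div_assoc', hreal]
  rw [Finset.sum_congr rfl hterm, ← Finset.sum_mul]
  have hcast : (∑ j ∈ range (J + 1), ((j + s).choose s : ℝ)) =
      ((s + J + 1).choose (s + 1) : ℝ) := by
    rw [← Nat.cast_sum, hockey s J]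
  rw [hcast]
  have hkey : (s + J + 1).choose (s + 1) * ((s + 1) * s.factorial) * J.factorial =
      (s + J + 1).factorial := by
    have h := Nat.choose_mul_factorial_mul_factorial
      (n := s + J + 1) (k := s + 1) (by omega)
    have h3 : s + J + 1 - (s + 1) = J := by omega
    rw [h3, Nat.factorial_succ] at h
    exact h
  have hkeyR := congrArg (fun k : ℕ => (k : ℝ)) hkey
  push_cast at hkeyR
  have hs1 : ((s : ℝ) + 1) ≠ 0 := by positivity
  field_simp
  linarith [hkeyR]

/-! ### The inner sum over supersets -/

lemma inner_sum (m : ℕ) (s : ℕ) (hs : s < m) :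
    ∑ A ∈ (Icc 1 (m - 1)).powerset.filter (fun A => Icc 1 s ⊆ A),
      ((A.card.factorial : ℝ) * ((m - A.card - 1).factorial : ℝ) / (m.factorial : ℝ)) =
      1 / (s + 1) := by
  have hcards : (Icc 1 s).card = s := by rw [Nat.card_Icc]; omega
  have step : ∑ A ∈ (Icc 1 (m - 1)).powerset.filter (fun A => Icc 1 s ⊆ A),
      ((A.card.factorial : ℝ) * ((m - A.card - 1).factorial : ℝ) / (m.factorial : ℝ)) =
      ∑ B ∈ (Icc (s + 1) (m - 1)).powerset,
      (((B.card + s).factorial : ℝ) * ((m - (B.card + s) - 1).factorial : ℝ) /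
        (m.factorial : ℝ)) := by
    refine Finset.sum_nbij' (i := fun A => A \ Icc 1 s) (j := fun B => B ∪ Icc 1 s)
      ?_ ?_ ?_ ?_ ?_
    · intro A hA
      rw [Finset.mem_filter, Finset.mem_powerset] at hA
      rw [Finset.mem_powerset]
      intro x hx
      rw [Finset.mem_sdiff, mem_Icc] at hx
      have h1 := mem_Icc.1 (hA.1 hx.1)
      rw [mem_Icc]
      omega
    · intro B hB
      rw [Finset.mem_powerset] at hB
      rw [Finset.mem_filter, Finset.mem_powerset]
      constructor
      · intro x hx
        rcases Finset.mem_union.1 hx with h | h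
        · have := mem_Icc.1 (hB h); rw [mem_Icc]; omega
        · have := mem_Icc.1 h; rw [mem_Icc]; omega
      · exact Finset.subset_union_right
    · intro A hA
      rw [Finset.mem_filter] at hA
      exact Finset.sdiff_union_of_subset hA.2
    · intro B hB
      rw [Finset.mem_powerset] at hB
      refine Finset.union_sdiff_cancel_right ?_
      rw [Finset.disjoint_left]
      intro x hx hx2
      have h1 := mem_Icc.1 (hB hx)
      have h2 := mem_Icc.1 hx2
      omega
    · intro A hA
      rw [Finset.mem_filter] at hA
      have hcard : (A \ Icc 1 s).card + s = A.card := by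
        have h := Finset.card_sdiff_add_card_eq_card hA.2
        rw [hcards] at h
        exact h
      rw [hcard]
  rw [step, Finset.sum_powerset_apply_card
    (f := fun k => ((k + s).factorial : ℝ) * ((m - (k + s) - 1).factorial : ℝ) /
      (m.factorial : ℝ))]
  have hJcard : (Icc (s + 1) (m - 1)).card = m - 1 - s := by rw [Nat.card_Icc]; omega
  rw [hJcard]
  obtain ⟨J, rfl⟩ : ∃ J, m = s + J + 1 := ⟨m - 1 - s, by omega⟩
  have hJ2 : s + J + 1 - 1 - s = J := by omega
  rw [hJ2]
  have := arith s J
  rw [← this]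
  refine Finset.sum_congr rfl fun j hj => ?_
  rw [nsmul_eq_mul]

/-! ### Pointwise expansion of the marginal contribution -/

lemma pointwise {m : ℕ} {A : Finset ℕ} (hA : A ⊆ Icc 1 (m - 1)) (hm : 1 ≤ m)
    (f : ℕ → ℝ) (hf0 : f 0 = 0) (hf1 : f 1 = 0) :
    f (runLen m A + 2) - f (runLen m A + 1) =
      ∑ s ∈ range m, (if Icc 1 s ⊆ A then f (s + 2) - 2 * f (s + 1) + f s else 0) := by
  have htle : runLen m A ≤ m - 1 := runLen_le
  have htnot : runLen m A + 1 ∉ A := runLen_succ_not_mem hA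
  have hfilter : (range m).filter (fun s => Icc 1 s ⊆ A) = range (runLen m A + 1) := by
    ext s
    rw [Finset.mem_filter, mem_range, mem_range]
    constructor
    · rintro ⟨hs, hsub'⟩
      by_contra h
      exact htnot (hsub' (mem_Icc.2 ⟨by omega, by omega⟩))
    · intro hs
      refine ⟨by omega, fun x hx => ?_⟩
      rw [mem_Icc] at hx
      exact runLen_subset (m := m) (mem_Icc.2 ⟨hx.1, by omega⟩)
  rw [← Finset.sum_filter, hfilter]
  have hcongr : ∀ s ∈ range (runLen m A + 1),
      f (s + 2) - 2 * f (s + 1) + f s =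
        (f (s + 1 + 1) - f (s + 1)) - (f (s + 1) - f s) := by
    intro s _; ring
  rw [Finset.sum_congr rfl hcongr, Finset.sum_range_sub (fun s => f (s + 1) - f s)]
  rw [hf0, hf1]
  ring

/-! ### The Shapley value of the end edge of the chain -/

lemma shapley_chain (m : ℕ) (hm : 1 ≤ m) (f : ℕ → ℝ) (hf0 : f 0 = 0) (hf1 : f 1 = 0) :
    shapley (chainEdges (m + 1)) (linkGame (fun S : Finset (Fin (m + 1)) => f S.card))
      (ed m 0) =
      ∑ s ∈ range m, (f (s + 2) - 2 * f (s + 1) + f s) * (1 / (s + 1)) := by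
  have herase : (chainEdges (m + 1)).erase (ed m 0) = (Icc 1 (m - 1)).image (ed m) := by
    rw [chainEdges_eq]
    ext e
    rw [Finset.mem_erase, Finset.mem_image, Finset.mem_image]
    constructor
    · rintro ⟨hne, a, ha, rfl⟩
      rw [mem_range] at ha
      refine ⟨a, mem_Icc.2 ⟨?_, by omega⟩, rfl⟩
      rcases Nat.eq_zero_or_pos a with rfl | h
      · exact absurd rfl hne
      · omega
    · rintro ⟨a, ha, rfl⟩
      rw [mem_Icc] at ha
      have ham : a < m := by omega
      refine ⟨fun h => ?_, a, mem_range.2 ham, rfl⟩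
      have := ed_ne ham hm h
      omega
  unfold shapley
  rw [herase, card_chainEdges]
  have step1 : ∑ L ∈ ((Icc 1 (m - 1)).image (ed m)).powerset,
      ((L.card.factorial : ℝ) * ((m - L.card - 1).factorial : ℝ) / (m.factorial : ℝ)) *
        (linkGame (fun S : Finset (Fin (m + 1)) => f S.card) (insert (ed m 0) L) -
          linkGame (fun S : Finset (Fin (m + 1)) => f S.card) L) =
      ∑ A ∈ (Icc 1 (m - 1)).powerset,
      ((A.card.factorial : ℝ) * ((m - A.card - 1).factorial : ℝ) / (m.factorial : ℝ)) *
        (f (runLen m A + 2) - f (runLen m A + 1)) := by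
    refine Finset.sum_nbij' (i := fun L => (Icc 1 (m - 1)).filter (fun a => ed m a ∈ L))
      (j := fun A => A.image (ed m)) ?_ ?_ ?_ ?_ ?_
    · intro L hL
      exact Finset.mem_powerset.2 (Finset.filter_subset _ _)
    · intro A hA
      rw [Finset.mem_powerset] at hA ⊢
      exact Finset.image_subset_image hA
    · intro L hL
      rw [Finset.mem_powerset] at hL
      ext e
      simp only [Finset.mem_image, Finset.mem_filter]
      constructor
      · rintro ⟨a, ⟨haI, haL⟩, rfl⟩
        exact haL
      · intro he
        obtain ⟨a, haI, rfl⟩ := Finset.mem_image.1 (hL he)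
        exact ⟨a, ⟨haI, he⟩, rfl⟩
    · intro A hA
      rw [Finset.mem_powerset] at hA
      ext a
      simp only [Finset.mem_filter, Finset.mem_image]
      constructor
      · rintro ⟨haI, b, hb, hEq⟩
        have h1 := mem_Icc.1 (hA hb)
        have h2 := mem_Icc.1 haI
        have := ed_ne (by omega) (by omega) hEq
        rwa [← this]
      · intro ha
        exact ⟨hA ha, a, ha, rfl⟩
    · intro L hL
      rw [Finset.mem_powerset] at hL
      set A := (Icc 1 (m - 1)).filter (fun a => ed m a ∈ L) with hAdef
      have hAI : A ⊆ Icc 1 (m - 1) := Finset.filter_subset _ _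
      have him : A.image (ed m) = L := by
        ext e
        simp only [hAdef, Finset.mem_image, Finset.mem_filter]
        constructor
        · rintro ⟨a, ⟨haI, haL⟩, rfl⟩
          exact haL
        · intro he
          obtain ⟨a, haI, rfl⟩ := Finset.mem_image.1 (hL he)
          exact ⟨a, ⟨haI, he⟩, rfl⟩
      have hcA : (A.image (ed m)).card = A.card := by
        refine Finset.card_image_of_injOn ?_
        intro a ha b hb h
        have h1 := mem_Icc.1 (hAI ha)
        have h2 := mem_Icc.1 (hAI hb)
        exact ed_ne (by omega) (by omega) h
      rw [← him, hcA, linkGame_insert hm hAI f hf1]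
  rw [step1]
  calc ∑ A ∈ (Icc 1 (m - 1)).powerset,
        ((A.card.factorial : ℝ) * ((m - A.card - 1).factorial : ℝ) / (m.factorial : ℝ)) *
          (f (runLen m A + 2) - f (runLen m A + 1))
      = ∑ A ∈ (Icc 1 (m - 1)).powerset, ∑ s ∈ range m,
        (if Icc 1 s ⊆ A then
          ((A.card.factorial : ℝ) * ((m - A.card - 1).factorial : ℝ) / (m.factorial : ℝ)) *
            (f (s + 2) - 2 * f (s + 1) + f s) else 0) := by
        refine Finset.sum_congr rfl fun A hA => ?_
        rw [Finset.mem_powerset] at hA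
        rw [pointwise hA hm f hf0 hf1, Finset.mul_sum]
        refine Finset.sum_congr rfl fun s _ => ?_
        rw [mul_ite, mul_zero]
    _ = ∑ s ∈ range m, ∑ A ∈ (Icc 1 (m - 1)).powerset,
        (if Icc 1 s ⊆ A then
          ((A.card.factorial : ℝ) * ((m - A.card - 1).factorial : ℝ) / (m.factorial : ℝ)) *
            (f (s + 2) - 2 * f (s + 1) + f s) else 0) := Finset.sum_comm
    _ = ∑ s ∈ range m, (f (s + 2) - 2 * f (s + 1) + f s) * (1 / (s + 1)) := by
        refine Finset.sum_congr rfl fun s hs => ?_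
        rw [mem_range] at hs
        rw [← Finset.sum_filter, ← Finset.sum_mul, inner_sum m s hs]
        ring

/-! ### Position value of the end node -/

lemma posVal (m : ℕ) (f : ℕ → ℝ) (hf0 : f 0 = 0) (hf1 : f 1 = 0) :
    positionValue (fun S : Finset (Fin (m + 1)) => f S.card) (chainEdges (m + 1)) (vtx m 0) =
      (1 / 2) * ∑ s ∈ range m, (f (s + 2) - 2 * f (s + 1) + f s) * (1 / (s + 1)) := by
  rcases Nat.eq_zero_or_pos m with rfl | hm
  · have h0 : chainEdges (0 + 1) = (∅ : Finset (Sym2 (Fin 1))) := by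
      rw [chainEdges_eq]
      simp
    unfold positionValue
    rw [h0]
    simp
  · unfold positionValue
    have hfilt : (chainEdges (m + 1)).filter (fun e => vtx m 0 ∈ e) = {ed m 0} := by
      ext e
      rw [Finset.mem_filter, Finset.mem_singleton, chainEdges_eq]
      constructor
      · rintro ⟨he, hx⟩
        obtain ⟨a, ha, rfl⟩ := Finset.mem_image.1 he
        rw [mem_range] at ha
        rw [mem_ed] at hx
        have ha0 : a = 0 := by
          rcases hx with h | h
          · have := congrArg Fin.val h
            rw [vtx_val (Nat.zero_le m), vtx_val (by omega)] at this
            omega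
          · have := congrArg Fin.val h
            rw [vtx_val (Nat.zero_le m), vtx_val (by omega)] at this
            omega
        rw [ha0]
      · rintro rfl
        exact ⟨Finset.mem_image_of_mem _ (mem_range.2 hm), mem_ed.2 (Or.inl rfl)⟩
    rw [hfilt, Finset.sum_singleton, shapley_chain m hm f hf0 hf1]

/-! ### Convexity gives nonnegative second differences -/

lemma dd_nonneg (f : ℕ → ℝ) (N : ℕ)
    (hconv : ConvexGame (fun S : Finset (Fin N) => f S.card)) (s : ℕ) (h : s + 2 ≤ N) :
    0 ≤ f (s + 2) - 2 * f (s + 1) + f s := by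
  have hlast : (Fin.last (s + 1) : Fin (s + 2)) ≠ 0 := by
    intro hc
    have := congrArg Fin.val hc
    simp [Fin.last] at this
  set emb : Fin (s + 2) ↪ Fin N := (Fin.castLEEmb h) with hembdef
  set A : Finset (Fin (s + 2)) := univ.erase (Fin.last (s + 1)) with hAdef
  set B : Finset (Fin (s + 2)) := univ.erase 0 with hBdef
  have hAB : A ∪ B = univ := by
    ext x
    simp only [hAdef, hBdef, Finset.mem_union, Finset.mem_erase, Finset.mem_univ,
      and_true, iff_true]
    rcases eq_or_ne x 0 with rfl | hx
    · exact Or.inl fun hc => hlast hc.symm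
    · exact Or.inr hx
  have hcardA : A.card = s + 1 := by
    rw [hAdef, Finset.card_erase_of_mem (Finset.mem_univ _), Finset.card_univ,
      Fintype.card_fin]
    omega
  have hcardB : B.card = s + 1 := by
    rw [hBdef, Finset.card_erase_of_mem (Finset.mem_univ _), Finset.card_univ,
      Fintype.card_fin]
    omega
  have hcap : (A ∩ B).card = s := by
    have h2 := Finset.card_inter_add_card_union A B
    rw [hAB, hcardA, hcardB, Finset.card_univ, Fintype.card_fin] at h2
    omega
  have key := hconv (A.map emb) (B.map emb)
  simp only [] at key
  rw [← Finset.map_union, ← Finset.map_inter, Finset.card_map, Finset.card_map,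
    Finset.card_map, Finset.card_map, hAB, hcardA, hcardB, hcap, Finset.card_univ,
    Fintype.card_fin] at key
  linarith

end ChainAux

/-- the position value of an end node of a chain increases with the
length of the chain (for zero-normalized symmetric convex games). -/
theorem chain_end_node_monotone (f : ℕ → ℝ) (hf0 : f 0 = 0) (hf1 : f 1 = 0)
    (n₁ n₂ : ℕ) (h1 : 0 < n₁) (h12 : n₁ < n₂)
    (hconv₁ : ConvexGame (fun S : Finset (Fin n₁) => f S.card))
    (hconv₂ : ConvexGame (fun S : Finset (Fin n₂) => f S.card)) :
    positionValue (fun S : Finset (Fin n₁) => f S.card) (chainEdges n₁) ⟨0, h1⟩ ≤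
      positionValue (fun S : Finset (Fin n₂) => f S.card) (chainEdges n₂)
        ⟨0, by omega⟩ := by
  open ChainAux Finset in
  obtain ⟨m₁, rfl⟩ : ∃ m, n₁ = m + 1 := ⟨n₁ - 1, by omega⟩
  obtain ⟨m₂, rfl⟩ : ∃ m, n₂ = m + 1 := ⟨n₂ - 1, by omega⟩
  have h0₁ : (⟨0, h1⟩ : Fin (m₁ + 1)) = ChainAux.vtx m₁ 0 :=
    Fin.ext ((ChainAux.vtx_val (Nat.zero_le _)).symm)
  have h0₂ : (⟨0, by omega⟩ : Fin (m₂ + 1)) = ChainAux.vtx m₂ 0 :=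
    Fin.ext ((ChainAux.vtx_val (Nat.zero_le _)).symm)
  rw [h0₁, h0₂, ChainAux.posVal m₁ f hf0 hf1, ChainAux.posVal m₂ f hf0 hf1]
  have hterm : ∀ s ∈ Finset.range m₂,
      (0:ℝ) ≤ (f (s + 2) - 2 * f (s + 1) + f s) * (1 / (s + 1)) := by
    intro s hs
    rw [Finset.mem_range] at hs
    have hdd := ChainAux.dd_nonneg f (m₂ + 1) hconv₂ s (by omega)
    have hpos : (0:ℝ) ≤ 1 / ((s : ℝ) + 1) := by positivity
    exact mul_nonneg hdd hpos
  have hsub : Finset.range m₁ ⊆ Finset.range m₂ := Finset.range_subset_range.2 (by omega)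
  have hle := Finset.sum_le_sum_of_subset_of_nonneg hsub (fun s hs _ => hterm s hs)
  linarith

end
end

section
/- Let (N,v) be a zero-normalized symmetric convex game and (N, E^C) the chain with n nodes numbered in the natural order. Then for 1 ≤ i ≤ n/2, the position value is monotone towards the middle of the chain: π_i(N,v,E^C) ≤ π_{i+1}(N,v,E^C). -/
open scoped Classical

noncomputable section

variable {V : Type*} [Fintype V] [DecidableEq V]

namespace ChainAux

/-- Edge `{j, j+1}` of the chain on `Fin n`. -/
def edg (n j : ℕ) (h : j + 1 < n) : Sym2 (Fin n) := s(⟨j, by omega⟩, ⟨j + 1, h⟩)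

/-- The smaller endpoint of an edge. -/
def idx {n : ℕ} : Sym2 (Fin n) → ℕ :=
  Sym2.lift ⟨fun a b => min a.val b.val, fun a b => min_comm _ _⟩

lemma idx_edg (n j : ℕ) (h : j + 1 < n) : idx (edg n j h) = j := by
  simp [idx, edg]

lemma mem_chainEdges {n : ℕ} {e : Sym2 (Fin n)} :
    e ∈ chainEdges n ↔ ∃ j, ∃ h : j + 1 < n, e = edg n j h := by
  constructor
  · intro he
    rw [chainEdges, Finset.mem_filter] at he
    obtain ⟨-, i, j, rfl, hj⟩ := he
    exact ⟨i.val, by omega, by simp [edg]; constructor <;> apply Fin.ext <;> simp [hj]⟩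
  · rintro ⟨j, h, rfl⟩
    rw [chainEdges, Finset.mem_filter]
    exact ⟨Finset.mem_univ _, ⟨j, by omega⟩, ⟨j+1, h⟩, rfl, rfl⟩

lemma edg_injective {n : ℕ} {j k : ℕ} (hj : j + 1 < n) (hk : k + 1 < n)
    (h : edg n j hj = edg n k hk) : j = k := by
  have := congrArg idx h
  rwa [idx_edg, idx_edg] at this

lemma idx_lt {n : ℕ} {e : Sym2 (Fin n)} (he : e ∈ chainEdges n) : idx e + 1 < n := by
  obtain ⟨j, h, rfl⟩ := mem_chainEdges.1 he
  rwa [idx_edg]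

lemma edg_idx {n : ℕ} {e : Sym2 (Fin n)} (he : e ∈ chainEdges n) :
    e = edg n (idx e) (idx_lt he) := by
  obtain ⟨j, h, rfl⟩ := mem_chainEdges.1 he
  simp_rw [idx_edg]

lemma mem_edg {n j : ℕ} (h : j + 1 < n) (x : Fin n) :
    x ∈ edg n j h ↔ x.val = j ∨ x.val = j + 1 := by
  rw [edg, Sym2.mem_iff]
  constructor
  · rintro (rfl | rfl) <;> simp
  · rintro (hx | hx)
    · left; exact Fin.ext hx
    · right; exact Fin.ext hx

lemma card_chainEdges_s9 (n : ℕ) : (chainEdges n).card = n - 1 := by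
  rw [← Finset.card_range (n-1)]
  apply Finset.card_bij (fun e _ => idx e)
  · intro e he
    have := idx_lt he
    simp only [Finset.mem_range]; omega
  · intro e he e' he' h
    rw [edg_idx he, edg_idx he']
    simp_rw [h]
  · intro j hj
    rw [Finset.mem_range] at hj
    exact ⟨edg n j (by omega), mem_chainEdges.2 ⟨j, by omega, rfl⟩, idx_edg n j (by omega)⟩

end ChainAux
namespace ChainAux

/-- All edge indices between `u` and `v` are present in `A`. -/
def fullbetween (A : Finset ℕ) (u v : ℕ) : Prop :=
  ∀ k, min u v ≤ k → k < max u v → k ∈ A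

lemma fullbetween.symm {A : Finset ℕ} {u v : ℕ} (h : fullbetween A u v) :
    fullbetween A v u := by
  intro k h1 h2
  exact h k (by omega) (by omega)

lemma fullbetween.refl (A : Finset ℕ) (u : ℕ) : fullbetween A u u := by
  intro k h1 h2; omega

lemma fullbetween.trans {A : Finset ℕ} {u v w : ℕ} (h1 : fullbetween A u v)
    (h2 : fullbetween A v w) : fullbetween A u w := by
  intro k hk1 hk2
  by_cases hc : min u v ≤ k ∧ k < max u v
  · exact h1 k hc.1 hc.2
  · exact h2 k (by omega) (by omega)

lemma adj_chain {n : ℕ} {L : Finset (Sym2 (Fin n))} (hL : L ⊆ chainEdges n)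
    {u v : Fin n} (h : (SimpleGraph.fromEdgeSet (↑L : Set (Sym2 (Fin n)))).Adj u v) :
    min u.val v.val ∈ L.image idx ∧ max u.val v.val = min u.val v.val + 1 := by
  rw [SimpleGraph.fromEdgeSet_adj] at h
  obtain ⟨hmem, hne⟩ := h
  simp only [Finset.mem_coe] at hmem
  obtain ⟨j, hj, he⟩ := mem_chainEdges.1 (hL hmem)
  rw [edg] at he
  rw [Sym2.eq_iff] at he
  have hval : (u.val = j ∧ v.val = j + 1) ∨ (u.val = j + 1 ∧ v.val = j) := by
    rcases he with ⟨h1, h2⟩ | ⟨h1, h2⟩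
    · left; exact ⟨congrArg Fin.val h1, congrArg Fin.val h2⟩
    · right; exact ⟨congrArg Fin.val h1, congrArg Fin.val h2⟩
  have hidx : idx s(u, v) = j := by
    rw [idx, Sym2.lift_mk]
    simp only
    omega
  constructor
  · rw [Finset.mem_image]
    refine ⟨s(u,v), hmem, by rw [hidx]; omega⟩
  · omega

lemma reach_fullbetween {n : ℕ} {L : Finset (Sym2 (Fin n))} (hL : L ⊆ chainEdges n)
    {u v : Fin n} (h : (SimpleGraph.fromEdgeSet (↑L : Set (Sym2 (Fin n)))).Reachable u v) :
    fullbetween (L.image idx) u.val v.val := by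
  obtain ⟨w⟩ := h
  induction w with
  | nil => exact fullbetween.refl _ _
  | @cons a b c hadj _ ih =>
    obtain ⟨h1, h2⟩ := adj_chain hL hadj
    refine fullbetween.trans (fun k hk1 hk2 => ?_) ih
    have hk : k = min a.val b.val := by omega
    rwa [hk]

lemma adj_of_mem {n : ℕ} {L : Finset (Sym2 (Fin n))} (hL : L ⊆ chainEdges n)
    {k : ℕ} (hk : k ∈ L.image idx) :
    ∃ h : k + 1 < n,
      (SimpleGraph.fromEdgeSet (↑L : Set (Sym2 (Fin n)))).Adj ⟨k, by omega⟩ ⟨k+1, h⟩ := by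
  rw [Finset.mem_image] at hk
  obtain ⟨e, heL, hei⟩ := hk
  have hk1 : k + 1 < n := by have := idx_lt (hL heL); omega
  refine ⟨hk1, ?_⟩
  rw [SimpleGraph.fromEdgeSet_adj]
  constructor
  · have he : e = s(⟨k, by omega⟩, ⟨k+1, hk1⟩) := by
      subst hei; exact edg_idx (hL heL)
    simp only [Finset.mem_coe]
    rw [← he]; exact heL
  · intro hc
    have := congrArg Fin.val hc
    simp at this

lemma fullbetween_reach_le {n : ℕ} {L : Finset (Sym2 (Fin n))} (hL : L ⊆ chainEdges n) :
    ∀ d (u v : Fin n), u.val ≤ v.val → v.val - u.val = d →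
      fullbetween (L.image idx) u.val v.val →
      (SimpleGraph.fromEdgeSet (↑L : Set (Sym2 (Fin n)))).Reachable u v := by
  intro d
  induction d with
  | zero =>
    intro u v h1 h2 _
    have : u = v := Fin.ext (by omega)
    rw [this]
  | succ d ih =>
    intro u v h1 h2 hf
    have hu : u.val ∈ L.image idx := by
      apply hf u.val (by omega) (by omega)
    obtain ⟨hlt, hadj⟩ := adj_of_mem hL hu
    have h0 : (⟨u.val, by omega⟩ : Fin n) = u := Fin.ext rfl
    rw [h0] at hadj
    refine (hadj.reachable).trans (ih ⟨u.val + 1, hlt⟩ v (by simp; omega) (by simp; omega) ?_)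
    intro k hk1 hk2
    simp only at hk1 hk2
    apply hf k (by omega) (by omega)

lemma reachable_iff_fullbetween {n : ℕ} {L : Finset (Sym2 (Fin n))} (hL : L ⊆ chainEdges n)
    {u v : Fin n} :
    (SimpleGraph.fromEdgeSet (↑L : Set (Sym2 (Fin n)))).Reachable u v ↔
      fullbetween (L.image idx) u.val v.val := by
  constructor
  · exact reach_fullbetween hL
  · intro h
    rcases le_total u.val v.val with hle | hle
    · exact fullbetween_reach_le hL _ u v hle rfl h
    · exact (fullbetween_reach_le hL _ v u hle rfl h.symm).symm

end ChainAux
namespace ChainAux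

/-- Left endpoints of maximal runs of `A`. -/
def starts (A : Finset ℕ) : Finset ℕ := A.filter (fun s => s = 0 ∨ s - 1 ∉ A)

/-- The right end of the run of `A` starting at `s` (searching up to `n`). -/
def runMax (A : Finset ℕ) (s n : ℕ) : ℕ :=
  Nat.findGreatest (fun M => Finset.Icc s M ⊆ A) n

lemma runMax_spec {A : Finset ℕ} {s n : ℕ} (hs : s ∈ A) (hsn : s ≤ n) :
    Finset.Icc s (runMax A s n) ⊆ A :=
  Nat.findGreatest_spec (P := fun M => Finset.Icc s M ⊆ A) hsn (by show Finset.Icc s s ⊆ A; rwa [Finset.Icc_self, Finset.singleton_subset_iff])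

lemma le_runMax {A : Finset ℕ} {s n : ℕ} (hs : s ∈ A) (hsn : s ≤ n) :
    s ≤ runMax A s n :=
  Nat.le_findGreatest (P := fun M => Finset.Icc s M ⊆ A) hsn (by show Finset.Icc s s ⊆ A; rwa [Finset.Icc_self, Finset.singleton_subset_iff])

lemma runMax_mem {A : Finset ℕ} {s n : ℕ} (hs : s ∈ A) (hsn : s ≤ n) :
    runMax A s n ∈ A :=
  runMax_spec hs hsn (Finset.mem_Icc.2 ⟨le_runMax hs hsn, le_refl _⟩)

lemma runMax_succ_notMem {A : Finset ℕ} {s n : ℕ} (hs : s ∈ A) (hsn : s ≤ n)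
    (hn : runMax A s n < n) : runMax A s n + 1 ∉ A := by
  intro hmem
  have hgr := Nat.findGreatest_is_greatest (P := fun M => Finset.Icc s M ⊆ A)
    (Nat.lt_succ_self (runMax A s n)) (by omega)
  apply hgr
  intro k hk
  rw [Finset.mem_Icc] at hk
  by_cases hk2 : k ≤ runMax A s n
  · exact runMax_spec hs hsn (Finset.mem_Icc.2 ⟨hk.1, hk2⟩)
  · have : k = runMax A s n + 1 := by omega
    rwa [this]

lemma le_runMax_of_full {A : Finset ℕ} {s n M : ℕ} (hM : Finset.Icc s M ⊆ A)
    (hMn : M ≤ n) : M ≤ runMax A s n :=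
  Nat.le_findGreatest hMn hM

/-- The vertex interval of the run starting at `s`, as a finset of `Fin n`. -/
def compF (n : ℕ) (A : Finset ℕ) (s : ℕ) : Finset (Fin n) :=
  Finset.univ.filter fun j => s ≤ j.val ∧ j.val ≤ runMax A s n + 1

lemma fullbetween_iff_runMax {A : Finset ℕ} {n s : ℕ} (hs : s ∈ starts A)
    (hsn : s ≤ n) (j : ℕ) (hj : j ≤ n) :
    fullbetween A s j ↔ s ≤ j ∧ j ≤ runMax A s n + 1 := by
  rw [starts, Finset.mem_filter] at hs
  obtain ⟨hsA, hs0⟩ := hs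
  constructor
  · intro hf
    have hsj : s ≤ j := by
      by_contra hc
      push_neg at hc
      have h1 : s - 1 ∈ A := hf (s - 1) (by omega) (by omega)
      rcases hs0 with h | h
      · omega
      · exact h h1
    refine ⟨hsj, ?_⟩
    rcases Nat.eq_or_lt_of_le hsj with rfl | hlt
    · have := le_runMax hsA hsn; omega
    · have hfull : Finset.Icc s (j - 1) ⊆ A := by
        intro k hk
        rw [Finset.mem_Icc] at hk
        exact hf k (by omega) (by omega)
      have := le_runMax_of_full (n := n) hfull (by omega)
      omega
  · rintro ⟨h1, h2⟩
    intro k hk1 hk2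
    have : k ∈ Finset.Icc s (runMax A s n) := Finset.mem_Icc.2 ⟨by omega, by omega⟩
    exact runMax_spec hsA hsn this

lemma mem_covered_iff {n : ℕ} {L : Finset (Sym2 (Fin n))} (hL : L ⊆ chainEdges n)
    (i : Fin n) :
    i ∈ covered L ↔ (i.val ∈ L.image idx ∨ (1 ≤ i.val ∧ i.val - 1 ∈ L.image idx)) := by
  rw [covered, Finset.mem_filter]
  simp only [Finset.mem_univ, true_and]
  constructor
  · rintro ⟨e, heL, hie⟩
    obtain ⟨j, hj, rfl⟩ := mem_chainEdges.1 (hL heL)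
    rw [mem_edg] at hie
    have hjA : j ∈ L.image idx := Finset.mem_image.2 ⟨_, heL, idx_edg n j hj⟩
    rcases hie with h | h
    · left; rwa [h]
    · right; constructor
      · omega
      · rw [h]; simpa using hjA
  · intro hmem
    rcases hmem with h | ⟨h1, h2⟩
    · obtain ⟨e, heL, hei⟩ := Finset.mem_image.1 h
      refine ⟨e, heL, ?_⟩
      have := edg_idx (hL heL)
      rw [this, mem_edg]
      left; omega
    · obtain ⟨e, heL, hei⟩ := Finset.mem_image.1 h2
      refine ⟨e, heL, ?_⟩
      have := edg_idx (hL heL)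
      rw [this, mem_edg]
      right; omega

lemma exists_start (A : Finset ℕ) :
    ∀ i, (i ∈ A ∨ (1 ≤ i ∧ i - 1 ∈ A)) → ∃ s ∈ starts A, s ≤ i ∧ fullbetween A s i := by
  intro i
  induction i using Nat.strong_induction_on with
  | _ i ih =>
    intro hi
    by_cases hc : 1 ≤ i ∧ i - 1 ∈ A
    · obtain ⟨s, hs, hsi, hf⟩ := ih (i - 1) (by omega) (Or.inl hc.2)
      refine ⟨s, hs, by omega, ?_⟩
      intro k hk1 hk2
      by_cases hk : k = i - 1
      · rw [hk]; exact hc.2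
      · exact hf k (by omega) (by omega)
    · have hiA : i ∈ A := by tauto
      refine ⟨i, ?_, le_refl _, fullbetween.refl _ _⟩
      rw [starts, Finset.mem_filter]
      refine ⟨hiA, ?_⟩
      by_cases h0 : i = 0
      · left; exact h0
      · right; intro hmem; exact hc ⟨by omega, hmem⟩

lemma starts_subset (A : Finset ℕ) : starts A ⊆ A := Finset.filter_subset _ _

lemma comp_eq_compF {n : ℕ} {L : Finset (Sym2 (Fin n))} (hL : L ⊆ chainEdges n)
    {s : ℕ} (hs : s ∈ starts (L.image idx)) (hsn : s < n) :
    comp L ⟨s, hsn⟩ = compF n (L.image idx) s := by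
  have hA : ∀ k ∈ L.image idx, k + 1 < n := by
    intro k hk
    obtain ⟨e, he, rfl⟩ := Finset.mem_image.1 hk
    exact idx_lt (hL he)
  ext j
  rw [comp, compF, Finset.mem_filter, Finset.mem_filter]
  simp only [Finset.mem_univ, true_and]
  rw [reachable_iff_fullbetween hL]
  exact fullbetween_iff_runMax hs (by omega) j.val (by omega)

lemma mem_compF_self {n : ℕ} {A : Finset ℕ} {s : ℕ} (hs : s ∈ A) (hsn : s < n)
    (hn : s ≤ n) : (⟨s, hsn⟩ : Fin n) ∈ compF n A s := by
  rw [compF, Finset.mem_filter]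
  have := le_runMax hs hn
  refine ⟨Finset.mem_univ _, ?_, ?_⟩ <;> simp only [Fin.val_mk] <;> omega

lemma comps_eq_image {n : ℕ} {L : Finset (Sym2 (Fin n))} (hL : L ⊆ chainEdges n) :
    comps L = (starts (L.image idx)).image (compF n (L.image idx)) := by
  have hA : ∀ k ∈ L.image idx, k + 1 < n := by
    intro k hk
    obtain ⟨e, he, rfl⟩ := Finset.mem_image.1 hk
    exact idx_lt (hL he)
  ext C
  rw [comps, Finset.mem_image, Finset.mem_image]
  constructor
  · rintro ⟨i, hi, rfl⟩
    rw [mem_covered_iff hL] at hi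
    obtain ⟨s, hs, hsi, hf⟩ := exists_start _ i.val hi
    have hsA : s ∈ L.image idx := starts_subset _ hs
    have hsn : s < n := by have := hA s hsA; omega
    refine ⟨s, hs, ?_⟩
    rw [← comp_eq_compF hL hs hsn]
    have hreach : (SimpleGraph.fromEdgeSet (↑L : Set (Sym2 (Fin n)))).Reachable ⟨s, hsn⟩ i := by
      rw [reachable_iff_fullbetween hL]
      exact hf
    ext j
    rw [comp, comp, Finset.mem_filter, Finset.mem_filter]
    simp only [Finset.mem_univ, true_and]
    exact ⟨fun h => hreach.symm.trans h, fun h => hreach.trans h⟩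
  · rintro ⟨s, hs, rfl⟩
    have hsA : s ∈ L.image idx := starts_subset _ hs
    have hsn : s < n := by have := hA s hsA; omega
    refine ⟨⟨s, hsn⟩, ?_, comp_eq_compF hL hs hsn⟩
    rw [mem_covered_iff hL]
    left; exact hsA

lemma card_compF {n : ℕ} {A : Finset ℕ} (hA : ∀ k ∈ A, k + 1 < n) {s : ℕ} (hs : s ∈ A) :
    (compF n A s).card = runMax A s n + 2 - s := by
  have hsn : s < n := by have := hA s hs; omega
  have hM : runMax A s n + 1 < n := by
    have := hA _ (runMax_mem (n := n) hs (by omega)); omega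
  have hcard : (compF n A s).card = (Finset.Icc s (runMax A s n + 1)).card := by
    apply Finset.card_bij (fun j _ => j.val)
    · intro j hj
      rw [compF, Finset.mem_filter] at hj
      rw [Finset.mem_Icc]
      exact hj.2
    · intro j _ j' _ h
      exact Fin.ext h
    · intro k hk
      rw [Finset.mem_Icc] at hk
      refine ⟨⟨k, by omega⟩, ?_, rfl⟩
      rw [compF, Finset.mem_filter]
      exact ⟨Finset.mem_univ _, hk.1, hk.2⟩
  rw [hcard, Nat.card_Icc]

lemma linkGame_eq_sum_starts {n : ℕ} (f : ℕ → ℝ) {L : Finset (Sym2 (Fin n))}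
    (hL : L ⊆ chainEdges n) :
    linkGame (fun S : Finset (Fin n) => f S.card) L =
      ∑ s ∈ starts (L.image idx), f (runMax (L.image idx) s n + 2 - s) := by
  have hA : ∀ k ∈ L.image idx, k + 1 < n := by
    intro k hk
    obtain ⟨e, he, rfl⟩ := Finset.mem_image.1 hk
    exact idx_lt (hL he)
  rw [linkGame, comps_eq_image hL]
  rw [Finset.sum_image]
  · apply Finset.sum_congr rfl
    intro s hs
    rw [card_compF hA (starts_subset _ hs)]
  · intro s hs s' hs' h
    have hsA := starts_subset _ hs
    have hs'A := starts_subset _ hs'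
    have hsn : s < n := by have := hA s hsA; omega
    have hs'n : s' < n := by have := hA s' hs'A; omega
    have h1 : (⟨s, hsn⟩ : Fin n) ∈ compF n (L.image idx) s' := by
      rw [← h]; exact mem_compF_self hsA hsn (by omega)
    have h2 : (⟨s', hs'n⟩ : Fin n) ∈ compF n (L.image idx) s := by
      rw [h]; exact mem_compF_self hs'A hs'n (by omega)
    rw [compF, Finset.mem_filter] at h1 h2
    simp only [Finset.mem_univ, true_and] at h1 h2
    omega

end ChainAux
namespace ChainAux

/-- Second difference of `f`. -/
def Dd (f : ℕ → ℝ) (r : ℕ) : ℝ := f (r + 1) - 2 * f r + f (r - 1)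

/-- The interval-decomposition form of the link game. -/
def W (f : ℕ → ℝ) (m : ℕ) (A : Finset ℕ) : ℝ :=
  ∑ q ∈ Finset.range m, ∑ p ∈ Finset.range (q + 1),
    (if Finset.Icc p q ⊆ A then Dd f (q - p + 1) else 0)

lemma sumD (f : ℕ → ℝ) (hf0 : f 0 = 0) (hf1 : f 1 = 0) (v : ℕ) :
    ∑ u ∈ Finset.range v, Dd f (u + 1) = f (v + 1) - f v := by
  induction v with
  | zero => simp [hf0, hf1]
  | succ v ih =>
    rw [Finset.sum_range_succ, ih, Dd]
    simp only [Nat.add_sub_cancel]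
    ring

/-- The start of the run of `A` containing `q`. -/
noncomputable def startOf (A : Finset ℕ) (q : ℕ) : ℕ :=
  if h : q ∈ A then (exists_start A q (Or.inl h)).choose else 0

lemma startOf_spec {A : Finset ℕ} {q : ℕ} (hq : q ∈ A) :
    startOf A q ∈ starts A ∧ startOf A q ≤ q ∧ Finset.Icc (startOf A q) q ⊆ A := by
  rw [startOf, dif_pos hq]
  obtain ⟨h1, h2, h3⟩ := (exists_start A q (Or.inl hq)).choose_spec
  refine ⟨h1, h2, ?_⟩
  intro k hk
  rw [Finset.mem_Icc] at hk
  by_cases hkq : k = q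
  · rwa [hkq]
  · exact h3 k (by omega) (by omega)

lemma start_unique {A : Finset ℕ} {s s' q : ℕ} (hs : s ∈ starts A) (hs' : s' ∈ starts A)
    (h1 : s ≤ q) (h2 : s' ≤ q) (h3 : Finset.Icc s q ⊆ A) (h4 : Finset.Icc s' q ⊆ A) :
    s = s' := by
  rw [starts, Finset.mem_filter] at hs hs'
  by_contra hne
  rcases Nat.lt_or_ge s s' with h | h
  · have : s' - 1 ∈ A := h3 (Finset.mem_Icc.2 ⟨by omega, by omega⟩)
    rcases hs'.2 with h0 | h0
    · omega
    · exact h0 this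
  · have hlt : s' < s := by omega
    have : s - 1 ∈ A := h4 (Finset.mem_Icc.2 ⟨by omega, by omega⟩)
    rcases hs.2 with h0 | h0
    · omega
    · exact h0 this

lemma fiber_eq {N m : ℕ} (hmN : m ≤ N) {A : Finset ℕ} (hA : ∀ k ∈ A, k < m)
    {s : ℕ} (hs : s ∈ starts A) :
    A.filter (fun q => startOf A q = s) = Finset.Icc s (runMax A s N) := by
  have hsA : s ∈ A := starts_subset _ hs
  have hsN : s ≤ N := by have := hA s hsA; omega
  ext q
  rw [Finset.mem_filter, Finset.mem_Icc]
  constructor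
  · rintro ⟨hqA, rfl⟩
    obtain ⟨h1, h2, h3⟩ := startOf_spec hqA
    refine ⟨h2, le_runMax_of_full (n := N) h3 (by have := hA q hqA; omega)⟩
  · rintro ⟨h1, h2⟩
    have hIcc : Finset.Icc s q ⊆ A := fun k hk => by
      rw [Finset.mem_Icc] at hk
      exact runMax_spec hsA hsN (Finset.mem_Icc.2 ⟨hk.1, by omega⟩)
    have hqA : q ∈ A := hIcc (Finset.mem_Icc.2 ⟨h1, le_refl _⟩)
    obtain ⟨g1, g2, g3⟩ := startOf_spec hqA
    exact ⟨hqA, start_unique g1 hs g2 h1 g3 hIcc⟩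

lemma sum_starts_eq_W (f : ℕ → ℝ) (hf0 : f 0 = 0) (hf1 : f 1 = 0)
    {N m : ℕ} (hmN : m ≤ N) {A : Finset ℕ} (hA : ∀ k ∈ A, k < m) :
    ∑ s ∈ starts A, f (runMax A s N + 2 - s) = W f m A := by
  rw [W]
  have hstep1 : ∑ q ∈ Finset.range m, ∑ p ∈ Finset.range (q + 1),
      (if Finset.Icc p q ⊆ A then Dd f (q - p + 1) else 0) =
      ∑ q ∈ A, ∑ p ∈ Finset.range (q + 1),
      (if Finset.Icc p q ⊆ A then Dd f (q - p + 1) else 0) := by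
    rw [Finset.sum_subset (fun k hk => Finset.mem_range.2 (hA k hk))]
    intro q _ hqA
    apply Finset.sum_eq_zero
    intro p hp
    rw [Finset.mem_range] at hp
    rw [if_neg]
    intro hsub
    exact hqA (hsub (Finset.mem_Icc.2 ⟨by omega, le_refl _⟩))
  rw [hstep1]
  rw [← Finset.sum_fiberwise_of_maps_to (g := startOf A)
    (fun q hq => (startOf_spec hq).1)]
  apply Finset.sum_congr rfl
  intro s hs
  have hsA : s ∈ A := starts_subset _ hs
  have hsN : s ≤ N := by have := hA s hsA; omega
  rw [fiber_eq hmN hA hs]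
  set M := runMax A s N with hM
  have hsM : s ≤ M := le_runMax hsA hsN
  have hinner : ∀ q ∈ Finset.Icc s M, ∑ p ∈ Finset.range (q + 1),
      (if Finset.Icc p q ⊆ A then Dd f (q - p + 1) else 0) =
      f (q - s + 2) - f (q - s + 1) := by
    intro q hq
    rw [Finset.mem_Icc] at hq
    have hcond : ∀ p, p ≤ q → (Finset.Icc p q ⊆ A ↔ s ≤ p) := by
      intro p hp
      constructor
      · intro hsub
        by_contra hc
        push_neg at hc
        have hs1 : s - 1 ∈ A := hsub (Finset.mem_Icc.2 ⟨by omega, by omega⟩)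
        rw [starts, Finset.mem_filter] at hs
        rcases hs.2 with h0 | h0
        · omega
        · exact h0 hs1
      · intro hsp k hk
        rw [Finset.mem_Icc] at hk
        exact runMax_spec hsA hsN (Finset.mem_Icc.2 ⟨by omega, by omega⟩)
    have h1 : ∑ p ∈ Finset.range (q + 1),
        (if Finset.Icc p q ⊆ A then Dd f (q - p + 1) else 0) =
        ∑ p ∈ Finset.Icc s q, Dd f (q - p + 1) := by
      rw [← Finset.sum_filter]
      congr 1
      ext p
      rw [Finset.mem_filter, Finset.mem_range, Finset.mem_Icc]
      constructor
      · rintro ⟨hp1, hp2⟩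
        exact ⟨(hcond p (by omega)).1 hp2, by omega⟩
      · rintro ⟨hp1, hp2⟩
        exact ⟨by omega, (hcond p hp2).2 hp1⟩
    rw [h1, ← Finset.Ico_add_one_right_eq_Icc, Finset.sum_Ico_eq_sum_range]
    have h2 : ∀ i ∈ Finset.range (q + 1 - s), Dd f (q - (s + i) + 1) =
        Dd f ((q + 1 - s) - 1 - i + 1) := by
      intro i hi
      rw [Finset.mem_range] at hi
      congr 1
      omega
    rw [Finset.sum_congr rfl h2, Finset.sum_range_reflect (fun j => Dd f (j + 1)),
      sumD f hf0 hf1]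
    have e1 : q + 1 - s + 1 = q - s + 2 := by omega
    have e2 : q + 1 - s = q - s + 1 := by omega
    rw [e1, e2]
  rw [Finset.sum_congr rfl hinner, ← Finset.Ico_add_one_right_eq_Icc, Finset.sum_Ico_eq_sum_range]
  have hc : ∀ i ∈ Finset.range (M + 1 - s),
      f (s + i - s + 2) - f (s + i - s + 1) = f (i + 1 + 1) - f (i + 1) := by
    intro i hi
    have e1 : s + i - s + 2 = i + 1 + 1 := by omega
    have e2 : s + i - s + 1 = i + 1 := by omega
    rw [e1, e2]
  rw [Finset.sum_congr rfl hc, Finset.sum_range_sub (fun u => f (u + 1)), hf1]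
  have e3 : M + 1 - s + 1 = M + 2 - s := by omega
  rw [e3, sub_zero]

end ChainAux
namespace ChainAux

lemma image_idx_bound {n : ℕ} {L : Finset (Sym2 (Fin n))} (hL : L ⊆ chainEdges n) :
    ∀ k ∈ L.image idx, k < n - 1 := by
  intro k hk
  obtain ⟨e, he, rfl⟩ := Finset.mem_image.1 hk
  have := idx_lt (hL he)
  omega

lemma linkGame_eq_W {n : ℕ} (f : ℕ → ℝ) (hf0 : f 0 = 0) (hf1 : f 1 = 0)
    {L : Finset (Sym2 (Fin n))} (hL : L ⊆ chainEdges n) :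
    linkGame (fun S : Finset (Fin n) => f S.card) L = W f (n - 1) (L.image idx) := by
  rw [linkGame_eq_sum_starts f hL]
  exact sum_starts_eq_W f hf0 hf1 (Nat.sub_le n 1) (image_idx_bound hL)

lemma idx_inj_chain {n : ℕ} {e e' : Sym2 (Fin n)} (he : e ∈ chainEdges n)
    (he' : e' ∈ chainEdges n) (h : idx e = idx e') : e = e' := by
  rw [edg_idx he, edg_idx he']
  simp_rw [h]

lemma sum_superset_coeff {α : Type*} [DecidableEq α] (c : ℕ → ℝ) (G J : Finset α)
    (hJ : J ⊆ G) :
    ∑ L ∈ G.powerset.filter (fun L => J ⊆ L), c L.card =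
      ∑ k ∈ Finset.range (G.card - J.card + 1),
        ((G.card - J.card).choose k : ℝ) * c (k + J.card) := by
  classical
  have hbij : ∑ L ∈ G.powerset.filter (fun L => J ⊆ L), c L.card =
      ∑ T ∈ (G \ J).powerset, c (T.card + J.card) := by
    apply Finset.sum_nbij' (fun L => L \ J) (fun T => T ∪ J)
    · intro L hL
      rw [Finset.mem_filter, Finset.mem_powerset] at hL
      rw [Finset.mem_powerset]
      exact Finset.sdiff_subset_sdiff hL.1 (le_refl _)
    · intro T hT
      rw [Finset.mem_powerset] at hT
      rw [Finset.mem_filter, Finset.mem_powerset]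
      constructor
      · apply Finset.union_subset _ hJ
        exact hT.trans (Finset.sdiff_subset)
      · exact Finset.subset_union_right
    · intro L hL
      rw [Finset.mem_filter, Finset.mem_powerset] at hL
      rw [Finset.sdiff_union_of_subset hL.2]
    · intro T hT
      rw [Finset.mem_powerset] at hT
      apply Finset.union_sdiff_cancel_right
      rw [Finset.disjoint_left]
      intro a ha haJ
      exact (Finset.mem_sdiff.1 (hT ha)).2 haJ
    · intro L hL
      rw [Finset.mem_filter, Finset.mem_powerset] at hL
      congr 1
      rw [Finset.card_sdiff_of_subset hL.2]
      have := Finset.card_le_card hL.2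
      omega
  rw [hbij]
  have hc : (G \ J).card = G.card - J.card := Finset.card_sdiff_of_subset hJ
  rw [Finset.sum_powerset]
  rw [hc]
  apply Finset.sum_congr rfl
  intro k _
  rw [Finset.sum_congr rfl (fun T hT => ?_), Finset.sum_const, Finset.card_powersetCard, hc]
  · rw [nsmul_eq_mul]
  · rw [Finset.mem_powersetCard] at hT
    rw [hT.2]

lemma W_insert_sub (f : ℕ → ℝ) (m : ℕ) (A : Finset ℕ) (j : ℕ) (hj : j ∉ A) :
    W f m (insert j A) - W f m A =
      ∑ q ∈ Finset.range m, ∑ p ∈ Finset.range (q + 1),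
        (if p ≤ j ∧ j ≤ q ∧ (Finset.Icc p q).erase j ⊆ A then Dd f (q - p + 1) else 0) := by
  rw [W, W, ← Finset.sum_sub_distrib]
  apply Finset.sum_congr rfl
  intro q _
  rw [← Finset.sum_sub_distrib]
  apply Finset.sum_congr rfl
  intro p _
  by_cases h1 : Finset.Icc p q ⊆ A
  · rw [if_pos (h1.trans (Finset.subset_insert j A)), if_pos h1, if_neg, sub_self]
    rintro ⟨hp, hq, -⟩
    exact hj (h1 (Finset.mem_Icc.2 ⟨hp, hq⟩))
  · by_cases h2 : Finset.Icc p q ⊆ insert j A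
    · rw [if_pos h2, if_neg h1, if_pos, sub_zero]
      have hjin : j ∈ Finset.Icc p q := by
        by_contra hc
        apply h1
        intro k hk
        rcases Finset.mem_insert.1 (h2 hk) with rfl | h
        · exact absurd hk hc
        · exact h
      rw [Finset.mem_Icc] at hjin
      refine ⟨hjin.1, hjin.2, ?_⟩
      intro k hk
      rw [Finset.mem_erase] at hk
      rcases Finset.mem_insert.1 (h2 hk.2) with rfl | h
      · exact absurd rfl hk.1
      · exact h
    · rw [if_neg h2, if_neg h1, if_neg, sub_self]
      rintro ⟨hp, hq, hsub⟩
      apply h2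
      intro k hk
      by_cases hkj : k = j
      · rw [hkj]; exact Finset.mem_insert_self _ _
      · exact Finset.mem_insert_of_mem (hsub (Finset.mem_erase.2 ⟨hkj, hk⟩))

end ChainAux
namespace ChainAux

/-- The Shapley coefficient. -/
def coeff (m t : ℕ) : ℝ :=
  (t.factorial : ℝ) * ((m - t - 1).factorial : ℝ) / (m.factorial : ℝ)

lemma coeff_def (m t : ℕ) : coeff m t =
    (t.factorial : ℝ) * ((m - t - 1).factorial : ℝ) / (m.factorial : ℝ) := rfl

lemma coeff_nonneg (m t : ℕ) : 0 ≤ coeff m t := by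
  rw [coeff]
  positivity

/-- The (nonnegative) total Shapley weight of a unanimity game of `r+1` consecutive
edges among `m` chain edges. -/
def TT (m r : ℕ) : ℝ :=
  ∑ k ∈ Finset.range (m - 1 - r + 1), ((m - 1 - r).choose k : ℝ) * coeff m (k + r)

lemma TT_nonneg (m r : ℕ) : 0 ≤ TT m r := by
  apply Finset.sum_nonneg
  intro k _
  exact mul_nonneg (by positivity) (coeff_nonneg _ _)

/-- The set of chain edges with indices in `S`. -/
def Jset (n : ℕ) (S : Finset ℕ) : Finset (Sym2 (Fin n)) :=
  (chainEdges n).filter (fun e => idx e ∈ S)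

lemma subset_image_idx_iff {n : ℕ} {L : Finset (Sym2 (Fin n))} (hL : L ⊆ chainEdges n)
    {S : Finset ℕ} (hS : ∀ k ∈ S, k + 1 < n) :
    S ⊆ L.image idx ↔ Jset n S ⊆ L := by
  constructor
  · intro h e' he'
    rw [Jset, Finset.mem_filter] at he'
    obtain ⟨e'', he''L, hi⟩ := Finset.mem_image.1 (h he'.2)
    have : e'' = e' := idx_inj_chain (hL he''L) he'.1 hi
    exact this ▸ he''L
  · intro h k hk
    have hkn := hS k hk
    have hedg : edg n k hkn ∈ Jset n S := by
      rw [Jset, Finset.mem_filter]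
      exact ⟨mem_chainEdges.2 ⟨k, hkn, rfl⟩, by rw [idx_edg]; exact hk⟩
    exact Finset.mem_image.2 ⟨edg n k hkn, h hedg, idx_edg n k hkn⟩

lemma card_Jset {n : ℕ} {S : Finset ℕ} (hS : ∀ k ∈ S, k + 1 < n) :
    (Jset n S).card = S.card := by
  apply Finset.card_bij (fun e _ => idx e)
  · intro e he
    exact (Finset.mem_filter.1 he).2
  · intro e he e' he' h
    exact idx_inj_chain (Finset.mem_filter.1 he).1 (Finset.mem_filter.1 he').1 h
  · intro k hk
    have hkn := hS k hk
    refine ⟨edg n k hkn, ?_, idx_edg n k hkn⟩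
    rw [Jset, Finset.mem_filter]
    exact ⟨mem_chainEdges.2 ⟨k, hkn, rfl⟩, by rw [idx_edg]; exact hk⟩

lemma shapley_formula (f : ℕ → ℝ) (hf0 : f 0 = 0) (hf1 : f 1 = 0)
    {n j : ℕ} (hj : j + 1 < n) :
    shapley (chainEdges n) (linkGame (fun S : Finset (Fin n) => f S.card)) (edg n j hj) =
    ∑ q ∈ Finset.range (n - 1), ∑ p ∈ Finset.range (q + 1),
      (if p ≤ j ∧ j ≤ q then Dd f (q - p + 1) * TT (n - 1) (q - p) else 0) := by
  have hej : edg n j hj ∈ chainEdges n := mem_chainEdges.2 ⟨j, hj, rfl⟩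
  set e := edg n j hj with he
  set m := n - 1 with hm
  rw [shapley]
  simp only [card_chainEdges_s9, ← hm, ← coeff_def]
  have hstep : ∀ L ∈ ((chainEdges n).erase e).powerset,
      coeff m L.card *
        (linkGame (fun S : Finset (Fin n) => f S.card) (insert e L) -
         linkGame (fun S : Finset (Fin n) => f S.card) L) =
      ∑ q ∈ Finset.range m, ∑ p ∈ Finset.range (q + 1),
        (if p ≤ j ∧ j ≤ q ∧ (Finset.Icc p q).erase j ⊆ L.image idx
         then coeff m L.card * Dd f (q - p + 1) else 0) := by
    intro L hL
    rw [Finset.mem_powerset] at hL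
    have hLs : L ⊆ chainEdges n := hL.trans (Finset.erase_subset _ _)
    have heL : e ∉ L := fun h => Finset.notMem_erase e _ (hL h)
    have hiL : insert e L ⊆ chainEdges n := Finset.insert_subset hej hLs
    have hjA : j ∉ L.image idx := by
      intro h
      obtain ⟨e', he', hi⟩ := Finset.mem_image.1 h
      have : e' = e := idx_inj_chain (hLs he') hej (by rw [hi, he, idx_edg])
      exact heL (this ▸ he')
    have hidxe : idx e = j := by rw [he, idx_edg]
    rw [linkGame_eq_W f hf0 hf1 hiL, linkGame_eq_W f hf0 hf1 hLs,
      Finset.image_insert, hidxe, ← hm, W_insert_sub f m _ j hjA, Finset.mul_sum]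
    apply Finset.sum_congr rfl
    intro q _
    rw [Finset.mul_sum]
    apply Finset.sum_congr rfl
    intro p _
    rw [mul_ite, mul_zero]
  rw [Finset.sum_congr rfl hstep, Finset.sum_comm]
  apply Finset.sum_congr rfl
  intro q hq
  rw [Finset.sum_comm]
  apply Finset.sum_congr rfl
  intro p hp
  rw [Finset.mem_range] at hq hp
  by_cases hc : p ≤ j ∧ j ≤ q
  · rw [if_pos hc]
    have hidxe : idx e = j := by rw [he, idx_edg]
    have hjIcc : j ∈ Finset.Icc p q := Finset.mem_Icc.2 hc
    set S := (Finset.Icc p q).erase j with hS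
    have hSbound : ∀ k ∈ S, k + 1 < n := by
      intro k hk
      rw [hS, Finset.mem_erase, Finset.mem_Icc] at hk
      omega
    have hJsub : Jset n S ⊆ (chainEdges n).erase e := by
      intro e' he'
      rw [Jset, Finset.mem_filter] at he'
      rw [Finset.mem_erase]
      refine ⟨?_, he'.1⟩
      rintro rfl
      have hjS : j ∈ S := hidxe ▸ he'.2
      rw [hS, Finset.mem_erase] at hjS
      exact hjS.1 rfl
    have hcond : ∀ L ∈ ((chainEdges n).erase e).powerset,
        (if p ≤ j ∧ j ≤ q ∧ S ⊆ L.image idx then coeff m L.card * Dd f (q - p + 1) else 0) =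
        (if Jset n S ⊆ L then coeff m L.card * Dd f (q - p + 1) else 0) := by
      intro L hL
      rw [Finset.mem_powerset] at hL
      have hLs : L ⊆ chainEdges n := hL.trans (Finset.erase_subset _ _)
      apply if_congr _ rfl rfl
      constructor
      · rintro ⟨-, -, h⟩
        exact (subset_image_idx_iff hLs hSbound).1 h
      · intro h
        exact ⟨hc.1, hc.2, (subset_image_idx_iff hLs hSbound).2 h⟩
    rw [Finset.sum_congr rfl hcond, ← Finset.sum_filter, ← Finset.sum_mul,
      sum_superset_coeff (fun t => coeff m t) _ _ hJsub]
    have hG : ((chainEdges n).erase e).card = m - 1 := by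
      rw [Finset.card_erase_of_mem hej, card_chainEdges_s9]
    have hJc : (Jset n S).card = q - p := by
      rw [card_Jset hSbound, hS, Finset.card_erase_of_mem hjIcc, Nat.card_Icc]
      omega
    rw [hG, hJc, mul_comm, TT]
  · rw [if_neg hc]
    apply Finset.sum_eq_zero
    intro L _
    rw [if_neg]
    tauto

end ChainAux
namespace ChainAux

lemma reindex_phi (f : ℕ → ℝ) (m j : ℕ) (hjm : j < m) :
    (∑ q ∈ Finset.range m, ∑ p ∈ Finset.range (q + 1),
      if p ≤ j ∧ j ≤ q then Dd f (q - p + 1) * TT m (q - p) else 0) =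
    ∑ r ∈ Finset.range m,
      (((Finset.range m).filter (fun p => p ≤ j ∧ j ≤ p + r ∧ p + r < m)).card : ℝ) *
        (Dd f (r + 1) * TT m r) := by
  classical
  have step1 : ∀ q ∈ Finset.range m,
      (∑ p ∈ Finset.range (q + 1), if p ≤ j ∧ j ≤ q then Dd f (q - p + 1) * TT m (q - p) else 0)
        = ∑ p ∈ Finset.range m,
            if p ≤ q ∧ p ≤ j ∧ j ≤ q then Dd f (q - p + 1) * TT m (q - p) else 0 := by
    intro q hq
    rw [Finset.mem_range] at hq
    rw [← Finset.sum_subset (Finset.range_subset_range.2 (by omega : q + 1 ≤ m))]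
    · apply Finset.sum_congr rfl
      intro p hp
      rw [Finset.mem_range] at hp
      apply if_congr _ rfl rfl
      constructor
      · rintro ⟨h1, h2⟩; exact ⟨by omega, h1, h2⟩
      · rintro ⟨-, h1, h2⟩; exact ⟨h1, h2⟩
    · intro p hp hnp
      rw [Finset.mem_range] at hp
      have : ¬ p < q + 1 := fun h => hnp (Finset.mem_range.2 h)
      exact if_neg (by rintro ⟨h1, -, -⟩; omega)
  rw [Finset.sum_congr rfl step1, ← Finset.sum_product']
  have step2 : ∀ r ∈ Finset.range m,
      (((Finset.range m).filter (fun p => p ≤ j ∧ j ≤ p + r ∧ p + r < m)).card : ℝ) *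
        (Dd f (r + 1) * TT m r)
      = ∑ p ∈ Finset.range m,
          if p ≤ j ∧ j ≤ p + r ∧ p + r < m then Dd f (r + 1) * TT m r else 0 := by
    intro r _
    rw [← Finset.sum_filter, Finset.sum_const, nsmul_eq_mul]
  rw [Finset.sum_congr rfl step2, ← Finset.sum_product']
  rw [← Finset.sum_filter
    (p := fun z : ℕ × ℕ => z.2 ≤ z.1 ∧ z.2 ≤ j ∧ j ≤ z.1),
    ← Finset.sum_filter (p := fun z : ℕ × ℕ => z.2 ≤ j ∧ j ≤ z.2 + z.1 ∧ z.2 + z.1 < m)]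
  apply Finset.sum_nbij' (fun z => (z.1 - z.2, z.2)) (fun z => (z.1 + z.2, z.2))
  · intro z hz
    rw [Finset.mem_filter, Finset.mem_product, Finset.mem_range, Finset.mem_range] at hz ⊢
    obtain ⟨⟨hq, hp⟩, h1, h2, h3⟩ := hz
    exact ⟨⟨by omega, by omega⟩, by omega, by omega, by omega⟩
  · intro z hz
    rw [Finset.mem_filter, Finset.mem_product, Finset.mem_range, Finset.mem_range] at hz ⊢
    obtain ⟨⟨hr, hp⟩, h1, h2, h3⟩ := hz
    exact ⟨⟨by omega, by omega⟩, by omega, by omega, by omega⟩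
  · intro z hz
    rw [Finset.mem_filter, Finset.mem_product, Finset.mem_range, Finset.mem_range] at hz
    obtain ⟨⟨hq, hp⟩, h1, h2, h3⟩ := hz
    ext <;> simp <;> omega
  · intro z hz
    rw [Finset.mem_filter, Finset.mem_product, Finset.mem_range, Finset.mem_range] at hz
    obtain ⟨⟨hr, hp⟩, h1, h2, h3⟩ := hz
    ext <;> simp <;> omega
  · intro z hz
    rfl

lemma count_le {m i r : ℕ} (h2 : 2 ≤ i) (hm : 2 * i ≤ m + 1) (him : i < m) (hr : r < m) :
    (((Finset.range m).filter (fun p => p ≤ i - 2 ∧ i - 2 ≤ p + r ∧ p + r < m)).card : ℝ) ≤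
    (((Finset.range m).filter (fun p => p ≤ i ∧ i ≤ p + r ∧ p + r < m)).card : ℝ) := by
  have e1 : (Finset.range m).filter (fun p => p ≤ i - 2 ∧ i - 2 ≤ p + r ∧ p + r < m) =
      Finset.Icc (i - 2 - r) (min (i - 2) (m - 1 - r)) := by
    ext p
    rw [Finset.mem_filter, Finset.mem_range, Finset.mem_Icc]
    omega
  have e2 : (Finset.range m).filter (fun p => p ≤ i ∧ i ≤ p + r ∧ p + r < m) =
      Finset.Icc (i - r) (min i (m - 1 - r)) := by
    ext p
    rw [Finset.mem_filter, Finset.mem_range, Finset.mem_Icc]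
    omega
  rw [e1, e2, Nat.card_Icc, Nat.card_Icc]
  have : min (i - 2) (m - 1 - r) + 1 - (i - 2 - r) ≤ min i (m - 1 - r) + 1 - (i - r) := by
    omega
  exact_mod_cast this

end ChainAux
namespace ChainAux

lemma Dd_nonneg {n : ℕ} {f : ℕ → ℝ}
    (hconv : ConvexGame (fun S : Finset (Fin n) => f S.card))
    {r : ℕ} (h1 : 1 ≤ r) (hrn : r + 1 ≤ n) : 0 ≤ Dd f r := by
  have hS : ∀ k ∈ insert r (Finset.range (r - 1)), k < n := by
    intro k hk
    rw [Finset.mem_insert, Finset.mem_range] at hk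
    omega
  have hT : ∀ k ∈ Finset.range r, k < n := by
    intro k hk
    rw [Finset.mem_range] at hk
    omega
  set S := Finset.attachFin (insert r (Finset.range (r - 1))) hS with hSdef
  set T := Finset.attachFin (Finset.range r) hT with hTdef
  have hST := hconv S T
  simp only at hST
  have hU : S ∪ T = Finset.attachFin (Finset.range (r + 1)) (by
      intro k hk
      rw [Finset.mem_range] at hk
      omega) := by
    ext x
    simp only [Finset.mem_union, hSdef, hTdef, Finset.mem_attachFin, Finset.mem_insert,
      Finset.mem_range]
    omega
  have hI : S ∩ T = Finset.attachFin (Finset.range (r - 1)) (by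
      intro k hk
      rw [Finset.mem_range] at hk
      omega) := by
    ext x
    simp only [Finset.mem_inter, hSdef, hTdef, Finset.mem_attachFin, Finset.mem_insert,
      Finset.mem_range]
    omega
  have hcS : S.card = r := by
    rw [hSdef, Finset.card_attachFin, Finset.card_insert_of_notMem (by
      rw [Finset.mem_range]; omega), Finset.card_range]
    omega
  have hcT : T.card = r := by rw [hTdef, Finset.card_attachFin, Finset.card_range]
  have hcU : (S ∪ T).card = r + 1 := by rw [hU, Finset.card_attachFin, Finset.card_range]
  have hcI : (S ∩ T).card = r - 1 := by rw [hI, Finset.card_attachFin, Finset.card_range]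
  rw [hcS, hcT, hcU, hcI] at hST
  rw [Dd]
  linarith

lemma phi_nonneg (f : ℕ → ℝ) (hf0 : f 0 = 0) (hf1 : f 1 = 0)
    {n : ℕ} (hconv : ConvexGame (fun S : Finset (Fin n) => f S.card))
    {j : ℕ} (hj : j + 1 < n) :
    0 ≤ shapley (chainEdges n) (linkGame (fun S : Finset (Fin n) => f S.card)) (edg n j hj) := by
  rw [shapley_formula f hf0 hf1]
  apply Finset.sum_nonneg
  intro q hq
  apply Finset.sum_nonneg
  intro p hp
  rw [Finset.mem_range] at hq hp
  by_cases hc : p ≤ j ∧ j ≤ q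
  · rw [if_pos hc]
    apply mul_nonneg _ (TT_nonneg _ _)
    exact Dd_nonneg hconv (by omega) (by omega)
  · rw [if_neg hc]

lemma phi_compare (f : ℕ → ℝ) (hf0 : f 0 = 0) (hf1 : f 1 = 0)
    {n : ℕ} (hconv : ConvexGame (fun S : Finset (Fin n) => f S.card))
    {i : ℕ} (h2 : 2 ≤ i) (hn : 2 * i ≤ n) (ha : i - 2 + 1 < n) (hb : i + 1 < n) :
    shapley (chainEdges n) (linkGame (fun S : Finset (Fin n) => f S.card)) (edg n (i - 2) ha) ≤
    shapley (chainEdges n) (linkGame (fun S : Finset (Fin n) => f S.card)) (edg n i hb) := by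
  rw [shapley_formula f hf0 hf1, shapley_formula f hf0 hf1]
  rw [reindex_phi f (n - 1) (i - 2) (by omega), reindex_phi f (n - 1) i (by omega)]
  apply Finset.sum_le_sum
  intro r hr
  rw [Finset.mem_range] at hr
  apply mul_le_mul_of_nonneg_right
  · exact count_le h2 (by omega) (by omega) hr
  · apply mul_nonneg _ (TT_nonneg _ _)
    exact Dd_nonneg hconv (by omega) (by omega)

end ChainAux
namespace ChainAux

lemma edg_congr {n j j' : ℕ} (hj : j + 1 < n) (hj' : j' + 1 < n) (h : j = j') :
    edg n j hj = edg n j' hj' := by subst h; rfl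

lemma pos_congr {n : ℕ} (v : Finset (Fin n) → ℝ) (E : Finset (Sym2 (Fin n)))
    {a b : ℕ} (ha : a < n) (hb : b < n) (h : a = b) :
    positionValue v E ⟨a, ha⟩ = positionValue v E ⟨b, hb⟩ := by subst h; rfl

lemma filter_incident_zero {n v : ℕ} (hn : 2 ≤ n) (hv : v = 0) (hvn : v < n) :
    (chainEdges n).filter (fun e => (⟨v, hvn⟩ : Fin n) ∈ e) =
      {edg n 0 (by omega)} := by
  subst hv
  ext e
  rw [Finset.mem_filter, Finset.mem_singleton]
  constructor
  · rintro ⟨he, hme⟩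
    rw [edg_idx he, mem_edg] at hme
    simp only [Fin.val_mk] at hme
    have h0 : idx e = 0 := by omega
    exact idx_inj_chain he (mem_chainEdges.2 ⟨0, by omega, rfl⟩)
      (by rw [h0, idx_edg])
  · rintro rfl
    refine ⟨mem_chainEdges.2 ⟨0, by omega, rfl⟩, ?_⟩
    rw [mem_edg]
    left; rfl

lemma filter_incident_last {n v : ℕ} (hn : 2 ≤ n) (hv : v = n - 1) (hvn : v < n) :
    (chainEdges n).filter (fun e => (⟨v, hvn⟩ : Fin n) ∈ e) =
      {edg n (n - 2) (by omega)} := by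
  subst hv
  ext e
  rw [Finset.mem_filter, Finset.mem_singleton]
  constructor
  · rintro ⟨he, hme⟩
    rw [edg_idx he, mem_edg] at hme
    simp only [Fin.val_mk] at hme
    have hlt := idx_lt he
    have h0 : idx e = n - 2 := by omega
    exact idx_inj_chain he (mem_chainEdges.2 ⟨n - 2, by omega, rfl⟩)
      (by rw [h0, idx_edg])
  · rintro rfl
    refine ⟨mem_chainEdges.2 ⟨n - 2, by omega, rfl⟩, ?_⟩
    rw [mem_edg]
    right
    simp only [Fin.val_mk]
    omega

lemma filter_incident_mid {n v : ℕ} (h1 : 1 ≤ v) (h2 : v + 1 < n) (hvn : v < n) :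
    (chainEdges n).filter (fun e => (⟨v, hvn⟩ : Fin n) ∈ e) =
      {edg n (v - 1) (by omega), edg n v h2} := by
  ext e
  rw [Finset.mem_filter, Finset.mem_insert, Finset.mem_singleton]
  constructor
  · rintro ⟨he, hme⟩
    rw [edg_idx he, mem_edg] at hme
    simp only [Fin.val_mk] at hme
    rcases hme with h | h
    · right
      exact idx_inj_chain he (mem_chainEdges.2 ⟨v, h2, rfl⟩) (by rw [← h, idx_edg])
    · left
      exact idx_inj_chain he (mem_chainEdges.2 ⟨v - 1, by omega, rfl⟩)
        (by rw [idx_edg]; omega)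
  · rintro (rfl | rfl)
    · refine ⟨mem_chainEdges.2 ⟨v - 1, by omega, rfl⟩, ?_⟩
      rw [mem_edg]
      right
      simp only [Fin.val_mk]
      omega
    · refine ⟨mem_chainEdges.2 ⟨v, h2, rfl⟩, ?_⟩
      rw [mem_edg]
      left; rfl

lemma edg_ne {n j j' : ℕ} (hj : j + 1 < n) (hj' : j' + 1 < n) (h : j ≠ j') :
    edg n j hj ≠ edg n j' hj' := by
  intro hc
  exact h (edg_injective hj hj' hc)

end ChainAux

open ChainAux in
/-- along a chain, the position value increases from the end node towards
the middle: `π_i ≤ π_{i+1}` for `1 ≤ i ≤ n/2` (nodes numbered `1, …, n`, which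
correspond to the indices `0, …, n-1` of `Fin n`). -/
theorem chain_monotone_towards_middle (f : ℕ → ℝ) (hf0 : f 0 = 0) (hf1 : f 1 = 0)
    (n : ℕ) (hconv : ConvexGame (fun S : Finset (Fin n) => f S.card))
    (i : ℕ) (h1 : 1 ≤ i) (h2 : 2 * i ≤ n) :
    positionValue (fun S : Finset (Fin n) => f S.card) (chainEdges n)
        ⟨i - 1, by omega⟩ ≤
      positionValue (fun S : Finset (Fin n) => f S.card) (chainEdges n)
        ⟨i, by omega⟩ := by
  classical
  have hn2 : 2 ≤ n := by omega
  rcases Nat.lt_or_ge i 2 with hi1 | hi2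
  · -- i = 1
    have hi : i = 1 := by omega
    subst hi
    rw [pos_congr _ _ _ (by omega : (0:ℕ) < n) (by omega : 1 - 1 = 0)]
    rcases eq_or_lt_of_le hn2 with hn | hn
    · -- n = 2
      rw [positionValue, positionValue,
        filter_incident_zero hn2 rfl, filter_incident_last hn2 (by omega),
        Finset.sum_singleton, Finset.sum_singleton,
        edg_congr (by omega) (by omega : 0 + 1 < n) (by omega : n - 2 = 0)]
    · -- n ≥ 3
      rw [positionValue, positionValue,
        filter_incident_zero hn2 rfl, filter_incident_mid (le_refl 1) (by omega),
        Finset.sum_singleton,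
        Finset.sum_pair (edg_ne (by omega) (by omega) (by omega)),
        edg_congr (by omega) (by omega : 0 + 1 < n) (by omega : 1 - 1 = 0)]
      have := phi_nonneg f hf0 hf1 hconv (by omega : 1 + 1 < n)
      linarith
  · -- i ≥ 2
    have hin : i + 1 < n := by omega
    rw [positionValue, positionValue,
      filter_incident_mid (by omega : 1 ≤ i - 1) (by omega : (i - 1) + 1 < n),
      filter_incident_mid (by omega : 1 ≤ i) hin,
      Finset.sum_pair (edg_ne (by omega) (by omega) (by omega : i - 1 - 1 ≠ i - 1)),
      Finset.sum_pair (edg_ne (by omega) (by omega) (by omega : i - 1 ≠ i)),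
      edg_congr (by omega) (by omega : i - 2 + 1 < n) (by omega : i - 1 - 1 = i - 2),
      edg_congr (by omega : (i - 1) + 1 < n) (by omega : i - 1 + 1 < n) rfl]
    have hcmp := phi_compare f hf0 hf1 hconv hi2 h2 (by omega : i - 2 + 1 < n) hin
    linarith

end
end

section
/- Let (N,v) be a zero-normalized symmetric convex game. Let (N_1,E_1) and (N_2,E_2) be two disjoint graphs with N = N_1 ∪ N_2 and E = E_1 ∪ E_2. If a bridge b = {i₀, j₀} with i₀ ∈ N_1 and j₀ ∈ N_2 is added, then every node weakly gains position value: π_i(N,v,E) ≤ π_i(N,v,E∪{b}) for all i ∈ N. -/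
open scoped Classical

noncomputable section

variable {V : Type*} [Fintype V] [DecidableEq V]

section BridgeAux

set_option linter.unusedSectionVars false

/-- Reachability in the graph generated by edge set `L`. -/
def Rch (L : Finset (Sym2 V)) (a b : V) : Prop :=
  (SimpleGraph.fromEdgeSet (↑L : Set (Sym2 V))).Reachable a b

lemma Rch.refl (L : Finset (Sym2 V)) (a : V) : Rch L a a := Nonempty.intro SimpleGraph.Walk.nil

lemma Rch.symm' {L : Finset (Sym2 V)} {a b : V} (h : Rch L a b) : Rch L b a :=
  SimpleGraph.Reachable.symm h

lemma Rch.trans' {L : Finset (Sym2 V)} {a b c : V} (h : Rch L a b) (h' : Rch L b c) : Rch L a c :=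
  SimpleGraph.Reachable.trans h h'

lemma Rch.mono' {L L' : Finset (Sym2 V)} (hL : L ⊆ L') {a b : V} (h : Rch L a b) : Rch L' a b :=
  SimpleGraph.Reachable.mono (SimpleGraph.fromEdgeSet_mono (by exact_mod_cast hL)) h

lemma mem_comp {L : Finset (Sym2 V)} {i j : V} : j ∈ comp L i ↔ Rch L i j := by
  simp [comp, Rch]

lemma comp_eq_of_reach {L : Finset (Sym2 V)} {i j : V} (h : Rch L i j) :
    comp L i = comp L j := by
  ext z; simp only [mem_comp]
  exact ⟨fun hz => h.symm'.trans' hz, fun hz => h.trans' hz⟩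

lemma reach_of_comp_eq {L : Finset (Sym2 V)} {i j : V} (h : comp L i = comp L j) :
    Rch L i j := by
  have : j ∈ comp L i := h ▸ mem_comp.mpr (Rch.refl L j)
  exact mem_comp.mp this

lemma rch_adj {L : Finset (Sym2 V)} {x y : V} (hxy : x ≠ y) (h : s(x,y) ∈ L) : Rch L x y :=
  SimpleGraph.Adj.reachable ((SimpleGraph.fromEdgeSet_adj _).mpr ⟨by exact_mod_cast h, hxy⟩)

/-- Key: reachability after inserting one edge. -/
lemma reachable_insert_iff {L : Finset (Sym2 V)} {x y : V} (hxy : x ≠ y) (a b : V) :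
    Rch (insert s(x,y) L) a b ↔
      Rch L a b ∨ (Rch L a x ∧ Rch L y b) ∨ (Rch L a y ∧ Rch L x b) := by
  constructor
  · intro h
    obtain ⟨w⟩ := h
    induction w with
    | nil => exact Or.inl (Rch.refl L _)
    | @cons u c d hadj p ih =>
      rw [SimpleGraph.fromEdgeSet_adj _] at hadj
      obtain ⟨hmem, hne⟩ := hadj
      rw [Finset.coe_insert, Set.mem_insert_iff] at hmem
      rcases hmem with heq | hL
      · rw [Sym2.eq_iff] at heq
        rcases ih with hcb | ⟨hcx, hyb⟩ | ⟨hcy, hxb⟩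
        · rcases heq with ⟨rfl, rfl⟩ | ⟨rfl, rfl⟩
          · exact Or.inr (Or.inl ⟨Rch.refl L _, hcb⟩)
          · exact Or.inr (Or.inr ⟨Rch.refl L _, hcb⟩)
        · rcases heq with ⟨rfl, rfl⟩ | ⟨rfl, rfl⟩
          · exact Or.inr (Or.inl ⟨Rch.refl L _, hyb⟩)
          · exact Or.inl hyb
        · rcases heq with ⟨rfl, rfl⟩ | ⟨rfl, rfl⟩
          · exact Or.inl hxb
          · exact Or.inr (Or.inr ⟨Rch.refl L _, hxb⟩)
      · have huc : Rch L u c := Nonempty.intro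
          (SimpleGraph.Adj.toWalk ((SimpleGraph.fromEdgeSet_adj _).mpr ⟨hL, hne⟩))
        rcases ih with hcb | ⟨hcx, hyb⟩ | ⟨hcy, hxb⟩
        · exact Or.inl (huc.trans' hcb)
        · exact Or.inr (Or.inl ⟨huc.trans' hcx, hyb⟩)
        · exact Or.inr (Or.inr ⟨huc.trans' hcy, hxb⟩)
  · have hsub : L ⊆ insert s(x,y) L := Finset.subset_insert _ _
    have hxy' : Rch (insert s(x,y) L) x y :=
      rch_adj hxy (Finset.mem_insert_self _ _)
    rintro (h | ⟨h1, h2⟩ | ⟨h1, h2⟩)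
    · exact h.mono' hsub
    · exact ((h1.mono' hsub).trans' hxy').trans' (h2.mono' hsub)
    · exact ((h1.mono' hsub).trans' hxy'.symm').trans' (h2.mono' hsub)

/-- The value sum over all components (including singleton components). -/
def WW (v : Finset V → ℝ) (L : Finset (Sym2 V)) : ℝ :=
  ∑ C ∈ Finset.univ.image (comp L), v C

lemma comp_insert_of_not_reach {L : Finset (Sym2 V)} {x y : V} (hxy : x ≠ y)
    (h : ¬ Rch L x y) (z : V) :
    comp (insert s(x,y) L) z =
      if Rch L x z ∨ Rch L y z then comp L x ∪ comp L y else comp L z := by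
  split_ifs with hz
  · ext j
    simp only [mem_comp, Finset.mem_union, reachable_insert_iff hxy]
    rcases hz with hz | hz
    · constructor
      · rintro (hzj | ⟨hzx, hyj⟩ | ⟨hzy, hxj⟩)
        · exact Or.inl (hz.trans' hzj)
        · exact Or.inr hyj
        · exact absurd (hz.trans' hzy) h
      · rintro (hxj | hyj)
        · exact Or.inl (hz.symm'.trans' hxj)
        · exact Or.inr (Or.inl ⟨hz.symm', hyj⟩)
    · constructor
      · rintro (hzj | ⟨hzx, hyj⟩ | ⟨hzy, hxj⟩)
        · exact Or.inr (hz.trans' hzj)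
        · exact absurd (hz.trans' hzx).symm' h
        · exact Or.inl hxj
      · rintro (hxj | hyj)
        · exact Or.inr (Or.inr ⟨hz.symm', hxj⟩)
        · exact Or.inl (hz.symm'.trans' hyj)
  · push_neg at hz
    ext j
    simp only [mem_comp, reachable_insert_iff hxy]
    constructor
    · rintro (hzj | ⟨hzx, hyj⟩ | ⟨hzy, hxj⟩)
      · exact hzj
      · exact absurd hzx.symm' hz.1
      · exact absurd hzy.symm' hz.2
    · exact fun hzj => Or.inl hzj

lemma comp_insert_of_reach {L : Finset (Sym2 V)} {x y : V} (hxy : x ≠ y)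
    (h : Rch L x y) (z : V) : comp (insert s(x,y) L) z = comp L z := by
  ext j
  simp only [mem_comp, reachable_insert_iff hxy]
  constructor
  · rintro (hzj | ⟨hzx, hyj⟩ | ⟨hzy, hxj⟩)
    · exact hzj
    · exact (hzx.trans' h).trans' hyj
    · exact (hzy.trans' h.symm').trans' hxj
  · exact fun hzj => Or.inl hzj

lemma comp_subset_of_side {L : Finset (Sym2 V)} {N₁ N₂ : Finset V}
    (hdisj : Disjoint N₁ N₂)
    (hside : ∀ e ∈ L, (∀ z ∈ e, z ∈ N₁) ∨ (∀ z ∈ e, z ∈ N₂)) {i j : V}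
    (hi : i ∈ N₁) (h : Rch L i j) : j ∈ N₁ := by
  obtain ⟨w⟩ := h
  induction w with
  | nil => exact hi
  | @cons u c d hadj p ih =>
    apply ih
    rw [SimpleGraph.fromEdgeSet_adj] at hadj
    obtain ⟨hmem, hne⟩ := hadj
    rw [Finset.mem_coe] at hmem
    rcases hside _ hmem with hs | hs
    · exact hs c (Sym2.mem_mk_right _ _)
    · exact absurd hi (Finset.disjoint_right.mp hdisj (hs u (Sym2.mem_mk_left _ _)))

lemma WW_insert_of_reach {v : Finset V → ℝ} {L : Finset (Sym2 V)} {x y : V} (hxy : x ≠ y)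
    (h : Rch L x y) : WW v (insert s(x,y) L) = WW v L := by
  unfold WW
  congr 1
  apply Finset.image_congr
  intro z _
  exact comp_insert_of_reach hxy h z

lemma comps_disjoint {L : Finset (Sym2 V)} {x y : V} (h : ¬ Rch L x y) :
    comp L x ∩ comp L y = ∅ := by
  rw [Finset.eq_empty_iff_forall_notMem]
  intro z hz
  rw [Finset.mem_inter, mem_comp, mem_comp] at hz
  exact h (hz.1.trans' hz.2.symm')

lemma WW_insert_of_not_reach {v : Finset V → ℝ} {L : Finset (Sym2 V)} {x y : V} (hxy : x ≠ y)
    (h : ¬ Rch L x y) :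
    WW v (insert s(x,y) L) =
      WW v L + (v (comp L x ∪ comp L y) - v (comp L x) - v (comp L y)) := by
  classical
  set C1 := comp L x with hC1
  set C2 := comp L y with hC2
  have hC12 : C1 ≠ C2 := fun hEq => h (reach_of_comp_eq hEq)
  have himg : Finset.univ.image (comp (insert s(x,y) L)) =
      insert (C1 ∪ C2) ((Finset.univ.image (comp L)) \ {C1, C2}) := by
    ext D
    simp only [Finset.mem_image, Finset.mem_insert, Finset.mem_sdiff, Finset.mem_univ,
      true_and, Finset.mem_singleton]
    constructor
    · rintro ⟨z, rfl⟩
      rw [comp_insert_of_not_reach hxy h z]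
      split_ifs with hz
      · exact Or.inl rfl
      · push_neg at hz
        refine Or.inr ⟨⟨z, rfl⟩, ?_⟩
        push_neg
        constructor
        · intro hEq; exact hz.1 (reach_of_comp_eq (hC1 ▸ hEq)).symm'
        · intro hEq; exact hz.2 (reach_of_comp_eq (hC2 ▸ hEq)).symm'
    · rintro (rfl | ⟨⟨z, rfl⟩, hD⟩)
      · refine ⟨x, ?_⟩
        rw [comp_insert_of_not_reach hxy h x]
        rw [if_pos (Or.inl (Rch.refl L x))]
      · push_neg at hD
        refine ⟨z, ?_⟩
        rw [comp_insert_of_not_reach hxy h z]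
        rw [if_neg]
        push_neg
        constructor
        · intro hzx; exact hD.1 (comp_eq_of_reach hzx.symm')
        · intro hzy; exact hD.2 (comp_eq_of_reach hzy.symm')
  have hCnot : (C1 ∪ C2) ∉ (Finset.univ.image (comp L)) \ ({C1, C2} : Finset (Finset V)) := by
    intro hmem
    rw [Finset.mem_sdiff] at hmem
    obtain ⟨hm1, hm2⟩ := hmem
    obtain ⟨z, _, hz⟩ := Finset.mem_image.mp hm1
    have hx : x ∈ comp L z := by
      rw [hz]; exact Finset.mem_union_left _ (mem_comp.mpr (Rch.refl L x))
    have h1 : comp L z = C1 := comp_eq_of_reach (mem_comp.mp hx)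
    have hy : y ∈ comp L z := by
      rw [hz]; exact Finset.mem_union_right _ (mem_comp.mpr (Rch.refl L y))
    rw [h1] at hy
    exact h (mem_comp.mp hy)
  have hsplit : Finset.univ.image (comp L) =
      insert C1 (insert C2 ((Finset.univ.image (comp L)) \ {C1, C2})) := by
    ext D
    simp only [Finset.mem_insert, Finset.mem_sdiff, Finset.mem_singleton, Finset.mem_image,
      Finset.mem_univ, true_and]
    constructor
    · rintro ⟨z, rfl⟩
      by_cases h1 : comp L z = C1
      · exact Or.inl h1
      by_cases h2 : comp L z = C2
      · exact Or.inr (Or.inl h2)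
      · exact Or.inr (Or.inr ⟨⟨z, rfl⟩, by push_neg; exact ⟨h1, h2⟩⟩)
    · rintro (rfl | rfl | ⟨⟨z, rfl⟩, _⟩)
      · exact ⟨x, rfl⟩
      · exact ⟨y, rfl⟩
      · exact ⟨z, rfl⟩
  have h2not : C2 ∉ (Finset.univ.image (comp L)) \ ({C1, C2} : Finset (Finset V)) := by
    simp [Finset.mem_sdiff]
  have h1not : C1 ∉ insert C2 ((Finset.univ.image (comp L)) \ ({C1, C2} : Finset (Finset V))) := by
    simp only [Finset.mem_insert, Finset.mem_sdiff, Finset.mem_singleton, not_or]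
    exact ⟨hC12, by simp [Finset.mem_sdiff]⟩
  unfold WW
  rw [himg, Finset.sum_insert hCnot]
  conv_rhs => rw [hsplit]
  rw [Finset.sum_insert h1not, Finset.sum_insert h2not]
  ring

lemma comp_of_uncovered {L : Finset (Sym2 V)} {i : V} (h : i ∉ covered L) :
    comp L i = {i} := by
  ext j
  rw [mem_comp, Finset.mem_singleton]
  constructor
  · intro hr
    obtain ⟨w⟩ := hr
    cases w with
    | nil => rfl
    | cons hadj p =>
      exfalso
      rw [SimpleGraph.fromEdgeSet_adj] at hadj
      exact h (Finset.mem_filter.mpr ⟨Finset.mem_univ _,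
        ⟨_, Finset.mem_coe.mp hadj.1, Sym2.mem_mk_left _ _⟩⟩)
  · rintro rfl; exact Rch.refl L j

lemma linkGame_eq_WW {v : Finset V → ℝ} (hzn : ZeroNormalized v) (L : Finset (Sym2 V)) :
    linkGame v L = WW v L := by
  unfold linkGame WW comps
  have huniv : (Finset.univ : Finset V) = covered L ∪ (Finset.univ \ covered L) := by
    rw [Finset.union_sdiff_self_eq_union]
    simp
  rw [huniv, Finset.image_union]
  rw [← Finset.union_sdiff_self_eq_union, Finset.sum_union Finset.disjoint_sdiff]
  have : ∀ C ∈ ((Finset.univ \ covered L).image (comp L)) \ ((covered L).image (comp L)),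
      v C = 0 := by
    intro C hC
    obtain ⟨z, hz, rfl⟩ := Finset.mem_image.mp (Finset.mem_sdiff.mp hC).1
    rw [comp_of_uncovered (Finset.mem_sdiff.mp hz).2]
    exact hzn.2 z
  rw [Finset.sum_eq_zero this, add_zero]

lemma coeff_identity {n l : ℕ} (h : l + 1 ≤ n) :
    (l.factorial : ℝ) * ((n - l).factorial : ℝ) / ((n+1).factorial : ℝ)
      + ((l+1).factorial : ℝ) * ((n - l - 1).factorial : ℝ) / ((n+1).factorial : ℝ)
      = (l.factorial : ℝ) * ((n - l - 1).factorial : ℝ) / (n.factorial : ℝ) := by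
  obtain ⟨k, hk⟩ : ∃ k, n = l + 1 + k := ⟨n - (l+1), by omega⟩
  subst hk
  have h1 : l + 1 + k - l = k + 1 := by omega
  rw [h1]
  have h3 : k + 1 - 1 = k := rfl
  rw [h3]
  have hfact : ∀ m : ℕ, (0:ℝ) < (m.factorial : ℝ) := fun m => by
    exact_mod_cast m.factorial_pos
  rw [Nat.factorial_succ (l + 1 + k), Nat.factorial_succ l, Nat.factorial_succ k]
  push_cast
  field_simp
  ring

lemma shapley_nonneg {α : Type*} [DecidableEq α] {E : Finset α} {w : Finset α → ℝ} {b : α}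
    (hb : b ∉ E)
    (h : ∀ L ∈ E.powerset, w L ≤ w (insert b L)) :
    0 ≤ shapley (insert b E) w b := by
  unfold shapley
  rw [Finset.erase_insert hb]
  apply Finset.sum_nonneg
  intro L hL
  apply mul_nonneg
  · positivity
  · linarith [h L hL]

lemma shapley_mono {α : Type*} [DecidableEq α] {E : Finset α} {w : Finset α → ℝ} {b e : α}
    (hb : b ∉ E) (he : e ∈ E)
    (h : ∀ L ∈ (E.erase e).powerset,
      w (insert e L) - w L ≤ w (insert e (insert b L)) - w (insert b L)) :
    shapley E w e ≤ shapley (insert b E) w e := by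
  have hbe : b ≠ e := fun hEq => hb (hEq ▸ he)
  have hbE' : b ∉ E.erase e := fun hmem => hb (Finset.mem_of_mem_erase hmem)
  unfold shapley
  rw [Finset.erase_insert_of_ne hbe, Finset.powerset_insert]
  have hdisj : Disjoint (E.erase e).powerset ((E.erase e).powerset.image (insert b)) := by
    rw [Finset.disjoint_right]
    rintro L hL hL'
    obtain ⟨M, hM, rfl⟩ := Finset.mem_image.mp hL
    exact hbE' (Finset.mem_powerset.mp hL' (Finset.mem_insert_self b M))
  rw [Finset.sum_union hdisj]
  rw [Finset.sum_image (by
    intro M hM M' hM' hEq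
    have hbM : b ∉ M := fun hm => hbE' (Finset.mem_powerset.mp hM hm)
    have hbM' : b ∉ M' := fun hm => hbE' (Finset.mem_powerset.mp hM' hm)
    rw [← Finset.erase_insert hbM, ← Finset.erase_insert hbM', hEq])]
  rw [← Finset.sum_add_distrib]
  apply Finset.sum_le_sum
  intro L hL
  have hbL : b ∉ L := fun hm => hbE' (Finset.mem_powerset.mp hL hm)
  have hcard : (insert b E).card = E.card + 1 := Finset.card_insert_of_notMem hb
  have hcardL : (insert b L).card = L.card + 1 := Finset.card_insert_of_notMem hbL
  have hle : L.card + 1 ≤ E.card := by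
    have h1 : L.card ≤ (E.erase e).card := Finset.card_le_card (Finset.mem_powerset.mp hL)
    have h2 : (E.erase e).card = E.card - 1 := Finset.card_erase_of_mem he
    have h3 : 1 ≤ E.card := Finset.card_pos.mpr ⟨e, he⟩
    omega
  rw [hcard, hcardL]
  set n := E.card
  set l := L.card
  have hsub1 : n + 1 - l - 1 = n - l := by omega
  have hsub2 : n + 1 - (l + 1) - 1 = n - l - 1 := by omega
  rw [hsub1, hsub2]
  have hid := coeff_identity (n := n) (l := l) hle
  have hw := h L hL
  have hcnonneg : (0:ℝ) ≤ ((l+1).factorial : ℝ) * ((n - l - 1).factorial : ℝ)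
      / ((n+1).factorial : ℝ) := by positivity
  have key : (l.factorial : ℝ) * ((n - l - 1).factorial : ℝ) / (n.factorial : ℝ)
      * (w (insert e L) - w L)
      = (l.factorial : ℝ) * ((n - l).factorial : ℝ) / ((n+1).factorial : ℝ)
          * (w (insert e L) - w L)
        + ((l+1).factorial : ℝ) * ((n - l - 1).factorial : ℝ) / ((n+1).factorial : ℝ)
          * (w (insert e L) - w L) := by
    rw [← hid]; ring
  have hmul := mul_le_mul_of_nonneg_left hw hcnonneg
  linarith [key, hmul]

section Marginals

variable {v : Finset V → ℝ} {N₁ N₂ : Finset V} {L : Finset (Sym2 V)} {i₀ j₀ : V}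

lemma side_swap (hside : ∀ e ∈ L, (∀ z ∈ e, z ∈ N₁) ∨ (∀ z ∈ e, z ∈ N₂)) :
    ∀ e ∈ L, (∀ z ∈ e, z ∈ N₂) ∨ (∀ z ∈ e, z ∈ N₁) := fun e he => (hside e he).symm

lemma not_reach_cross (hdisj : Disjoint N₁ N₂)
    (hside : ∀ e ∈ L, (∀ z ∈ e, z ∈ N₁) ∨ (∀ z ∈ e, z ∈ N₂))
    (hi₀ : i₀ ∈ N₁) (hj₀ : j₀ ∈ N₂) : ¬ Rch L i₀ j₀ := fun h =>
  Finset.disjoint_left.mp hdisj (comp_subset_of_side hdisj hside hi₀ h) hj₀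

lemma marg_bridge (hconv : ConvexGame v) (hzn : ZeroNormalized v)
    (hdisj : Disjoint N₁ N₂)
    (hside : ∀ e ∈ L, (∀ z ∈ e, z ∈ N₁) ∨ (∀ z ∈ e, z ∈ N₂))
    (hi₀ : i₀ ∈ N₁) (hj₀ : j₀ ∈ N₂) :
    WW v L ≤ WW v (insert s(i₀,j₀) L) := by
  have hij : i₀ ≠ j₀ := fun h => Finset.disjoint_left.mp hdisj hi₀ (h ▸ hj₀)
  have hnr : ¬ Rch L i₀ j₀ := not_reach_cross hdisj hside hi₀ hj₀
  rw [WW_insert_of_not_reach hij hnr]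
  have hconv' := hconv (comp L i₀) (comp L j₀)
  rw [comps_disjoint hnr, hzn.1] at hconv'
  linarith

lemma marg_key (hconv : ConvexGame v) (hdisj : Disjoint N₁ N₂)
    (hside : ∀ e ∈ L, (∀ z ∈ e, z ∈ N₁) ∨ (∀ z ∈ e, z ∈ N₂))
    (hi₀ : i₀ ∈ N₁) (hj₀ : j₀ ∈ N₂) {x y : V} (hxy : x ≠ y)
    (hx : x ∈ N₁) (hy : y ∈ N₁) :
    WW v (insert s(x,y) L) - WW v L ≤
      WW v (insert s(x,y) (insert s(i₀,j₀) L)) - WW v (insert s(i₀,j₀) L) := by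
  have hij : i₀ ≠ j₀ := fun h => Finset.disjoint_left.mp hdisj hi₀ (h ▸ hj₀)
  have hnrij : ¬ Rch L i₀ j₀ := not_reach_cross hdisj hside hi₀ hj₀
  set Lb := insert s(i₀,j₀) L with hLb
  have hN2side : ∀ {a c : V}, a ∈ N₂ → Rch L a c → c ∈ N₂ := fun ha h =>
    comp_subset_of_side hdisj.symm (side_swap hside) ha h
  have hN1side : ∀ {a c : V}, a ∈ N₁ → Rch L a c → c ∈ N₁ := fun ha h =>
    comp_subset_of_side hdisj hside ha h
  have hnotj₀x : ¬ Rch L j₀ x := fun h => Finset.disjoint_left.mp hdisj hx (hN2side hj₀ h)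
  have hnotj₀y : ¬ Rch L j₀ y := fun h => Finset.disjoint_left.mp hdisj hy (hN2side hj₀ h)
  by_cases hR : Rch L x y
  · have hRb : Rch Lb x y := hR.mono' (Finset.subset_insert _ _)
    rw [WW_insert_of_reach hxy hR, WW_insert_of_reach hxy hRb]
    linarith
  · have hnRb : ¬ Rch Lb x y := by
      rw [hLb, reachable_insert_iff hij]
      rintro (h | ⟨h1, h2⟩ | ⟨h1, h2⟩)
      · exact hR h
      · exact hnotj₀y h2
      · exact hnotj₀x h1.symm'
    rw [WW_insert_of_not_reach hxy hR, WW_insert_of_not_reach hxy hnRb]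
    have hcompx : comp Lb x = if Rch L i₀ x then comp L i₀ ∪ comp L j₀ else comp L x := by
      rw [hLb, comp_insert_of_not_reach hij hnrij x]
      by_cases hc : Rch L i₀ x
      · rw [if_pos (Or.inl hc), if_pos hc]
      · rw [if_neg (by rintro (h | h); exact hc h; exact hnotj₀x h), if_neg hc]
    have hcompy : comp Lb y = if Rch L i₀ y then comp L i₀ ∪ comp L j₀ else comp L y := by
      rw [hLb, comp_insert_of_not_reach hij hnrij y]
      by_cases hc : Rch L i₀ y
      · rw [if_pos (Or.inl hc), if_pos hc]
      · rw [if_neg (by rintro (h | h); exact hc h; exact hnotj₀y h), if_neg hc]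
    set A₁ := comp L i₀ with hA₁
    set A₂ := comp L j₀ with hA₂
    set C₁ := comp L x with hC₁
    set C₂ := comp L y with hC₂
    by_cases hx1 : Rch L i₀ x
    · have hCA : C₁ = A₁ := (comp_eq_of_reach hx1).symm
      have hy1 : ¬ Rch L i₀ y := fun h => hR (hx1.symm'.trans' h)
      rw [hcompx, hcompy, if_pos hx1, if_neg hy1]
      have hint : (A₁ ∪ A₂) ∩ (A₁ ∪ C₂) = A₁ := by
        have d1 : A₂ ∩ C₂ = ∅ := by
          rw [Finset.eq_empty_iff_forall_notMem]
          intro z hz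
          rw [Finset.mem_inter, mem_comp, mem_comp] at hz
          exact Finset.disjoint_left.mp hdisj (hN1side hy hz.2) (hN2side hj₀ hz.1)
        ext z
        simp only [Finset.mem_inter, Finset.mem_union]
        constructor
        · rintro ⟨h1 | h1, h2⟩
          · exact h1
          · rcases h2 with h2 | h2
            · exact h2
            · exact absurd (Finset.mem_inter.mpr ⟨h1, h2⟩) (by rw [d1]; simp)
        · intro hz; exact ⟨Or.inl hz, Or.inl hz⟩
      have huni : (A₁ ∪ A₂) ∪ (A₁ ∪ C₂) = (A₁ ∪ A₂) ∪ C₂ := by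
        ext z
        simp only [Finset.mem_union]
        tauto
      have hconv' := hconv (A₁ ∪ A₂) (A₁ ∪ C₂)
      rw [hint, huni] at hconv'
      rw [hCA]
      linarith
    · by_cases hy1 : Rch L i₀ y
      · have hCA : C₂ = A₁ := (comp_eq_of_reach hy1).symm
        rw [hcompx, hcompy, if_neg hx1, if_pos hy1]
        have hint : (A₁ ∪ A₂) ∩ (A₁ ∪ C₁) = A₁ := by
          have d1 : A₂ ∩ C₁ = ∅ := by
            rw [Finset.eq_empty_iff_forall_notMem]
            intro z hz
            rw [Finset.mem_inter, mem_comp, mem_comp] at hz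
            exact Finset.disjoint_left.mp hdisj (hN1side hx hz.2) (hN2side hj₀ hz.1)
          ext z
          simp only [Finset.mem_inter, Finset.mem_union]
          constructor
          · rintro ⟨h1 | h1, h2⟩
            · exact h1
            · rcases h2 with h2 | h2
              · exact h2
              · exact absurd (Finset.mem_inter.mpr ⟨h1, h2⟩) (by rw [d1]; simp)
          · intro hz; exact ⟨Or.inl hz, Or.inl hz⟩
        have huni : (A₁ ∪ A₂) ∪ (A₁ ∪ C₁) = (A₁ ∪ A₂) ∪ C₁ := by
          ext z
          simp only [Finset.mem_union]
          tauto
        have hconv' := hconv (A₁ ∪ A₂) (A₁ ∪ C₁)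
        rw [hint, huni] at hconv'
        rw [hCA]
        have e1 : C₁ ∪ A₁ = A₁ ∪ C₁ := Finset.union_comm _ _
        have e2 : C₁ ∪ (A₁ ∪ A₂) = (A₁ ∪ A₂) ∪ C₁ := Finset.union_comm _ _
        rw [e1, e2]
        linarith
      · rw [hcompx, hcompy, if_neg hx1, if_neg hy1]
        linarith

end Marginals

end BridgeAux

/-- adding a bridge between two disconnected societies weakly increases
the position value of every node (for zero-normalized symmetric convex games). -/
theorem bridge_weakly_benefits_all (v : Finset V → ℝ) (f : ℕ → ℝ)
    (hsym : SymmetricGame v f) (hzn : ZeroNormalized v) (hconv : ConvexGame v)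
    (N₁ N₂ : Finset V) (hdisj : Disjoint N₁ N₂) (hcover : N₁ ∪ N₂ = Finset.univ)
    (E₁ E₂ : Finset (Sym2 V)) (hE₁ : SimpleEdges E₁) (hE₂ : SimpleEdges E₂)
    (hE₁N : ∀ e ∈ E₁, ∀ x ∈ e, x ∈ N₁) (hE₂N : ∀ e ∈ E₂, ∀ x ∈ e, x ∈ N₂)
    (i₀ j₀ : V) (hi₀ : i₀ ∈ N₁) (hj₀ : j₀ ∈ N₂) (i : V) :
    positionValue v (E₁ ∪ E₂) i ≤
      positionValue v (insert s(i₀, j₀) (E₁ ∪ E₂)) i := by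
  classical
  set E : Finset (Sym2 V) := E₁ ∪ E₂ with hE
  set b : Sym2 V := s(i₀, j₀) with hb
  have hij : i₀ ≠ j₀ := fun h => Finset.disjoint_left.mp hdisj hi₀ (h ▸ hj₀)
  have hbE : b ∉ E := by
    rw [hE, Finset.mem_union]
    rintro (h | h)
    · exact Finset.disjoint_right.mp hdisj hj₀ (hE₁N _ h j₀ (Sym2.mem_mk_right _ _))
    · exact Finset.disjoint_left.mp hdisj hi₀ (hE₂N _ h i₀ (Sym2.mem_mk_left _ _))
  have hsideE : ∀ L : Finset (Sym2 V), L ⊆ E →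
      ∀ e ∈ L, (∀ z ∈ e, z ∈ N₁) ∨ (∀ z ∈ e, z ∈ N₂) := by
    intro L hL e he
    rcases Finset.mem_union.mp (hE ▸ hL he) with h | h
    · exact Or.inl (hE₁N e h)
    · exact Or.inr (hE₂N e h)
  have hM1 : ∀ L : Finset (Sym2 V), L ⊆ E → linkGame v L ≤ linkGame v (insert b L) := by
    intro L hL
    rw [linkGame_eq_WW hzn, linkGame_eq_WW hzn]
    exact marg_bridge hconv hzn hdisj (hsideE L hL) hi₀ hj₀
  have hM2 : ∀ x y : V, s(x,y) ∈ E → ∀ L : Finset (Sym2 V), L ⊆ E →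
      linkGame v (insert s(x,y) L) - linkGame v L ≤
        linkGame v (insert s(x,y) (insert b L)) - linkGame v (insert b L) := by
    intro x y he L hL
    have hxy : x ≠ y := by
      intro h
      have hdiag : Sym2.IsDiag s(x,y) := by rw [Sym2.mk_isDiag_iff]; exact h
      rcases Finset.mem_union.mp (hE ▸ he) with hh | hh
      · exact hE₁ _ hh hdiag
      · exact hE₂ _ hh hdiag
    rw [linkGame_eq_WW hzn, linkGame_eq_WW hzn, linkGame_eq_WW hzn, linkGame_eq_WW hzn]
    have hsideL := hsideE L hL
    rcases Finset.mem_union.mp (hE ▸ he) with hh | hh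
    · exact marg_key hconv hdisj hsideL hi₀ hj₀ hxy
        (hE₁N _ hh x (Sym2.mem_mk_left _ _)) (hE₁N _ hh y (Sym2.mem_mk_right _ _))
    · have hswap : (s(i₀, j₀) : Sym2 V) = s(j₀, i₀) := Sym2.eq_swap
      rw [hb, hswap]
      exact marg_key hconv hdisj.symm (side_swap hsideL) hj₀ hi₀ hxy
        (hE₂N _ hh x (Sym2.mem_mk_left _ _)) (hE₂N _ hh y (Sym2.mem_mk_right _ _))
  have hsum : ∑ e ∈ E.filter (fun e => i ∈ e), shapley E (linkGame v) e ≤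
      ∑ e ∈ E.filter (fun e => i ∈ e), shapley (insert b E) (linkGame v) e := by
    apply Finset.sum_le_sum
    intro e hef
    have heE : e ∈ E := (Finset.mem_filter.mp hef).1
    refine shapley_mono hbE heE ?_
    intro L hL
    have hLE : L ⊆ E := (Finset.mem_powerset.mp hL).trans (Finset.erase_subset _ _)
    clear hL hef
    revert heE
    induction e using Sym2.ind with
    | _ x y => exact fun heE => hM2 x y heE L hLE
  show (1 / 2 : ℝ) * ∑ e ∈ E.filter (fun e => i ∈ e), shapley E (linkGame v) e ≤
    (1 / 2 : ℝ) * ∑ e ∈ (insert b E).filter (fun e => i ∈ e), shapley (insert b E) (linkGame v) e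
  rw [Finset.filter_insert]
  split_ifs with hib
  · rw [Finset.sum_insert (fun hmem => hbE (Finset.mem_filter.mp hmem).1)]
    have h1 : 0 ≤ shapley (insert b E) (linkGame v) b :=
      shapley_nonneg hbE (fun L hL => hM1 L (Finset.mem_powerset.mp hL))
    linarith
  · linarith


end
end

section
/- Let Γ=(N,E) be a graph and add a new edge e₀ = {i₀, j₀}. Then for every node i not equal to i₀ or j₀, PA_i(N, E∪{e₀}) ≤ PA_i(N, E), i.e., adding an edge never increases the position attachment centrality of non-endpoint nodes. -/
open scoped Classical

noncomputable section

variable {V : Type*} [Fintype V] [DecidableEq V]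

set_option linter.unusedSectionVars false


lemma mem_comp' {L : Finset (Sym2 V)} {x y : V} :
    y ∈ comp L x ↔ (SimpleGraph.fromEdgeSet (↑L : Set (Sym2 V))).Reachable x y := by
  simp [comp]

lemma mem_covered' {L : Finset (Sym2 V)} {x : V} :
    x ∈ covered L ↔ ∃ e ∈ L, x ∈ e := by simp [covered]

lemma reachable_covered {L : Finset (Sym2 V)} {x y : V}
    (h : (SimpleGraph.fromEdgeSet (↑L : Set (Sym2 V))).Reachable x y) (hxy : x ≠ y) :
    y ∈ covered L := by
  obtain ⟨w⟩ := h.symm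
  cases w with
  | nil => exact absurd rfl hxy.symm
  | @cons _ c _ h p =>
      obtain ⟨hm, hne⟩ := (SimpleGraph.fromEdgeSet_adj _).1 h
      exact mem_covered'.2 ⟨s(y, c), hm, Sym2.mem_mk_left _ _⟩

lemma self_mem_comp {L : Finset (Sym2 V)} (x : V) : x ∈ comp L x :=
  mem_comp'.2 (SimpleGraph.Reachable.refl x)

lemma comp_eq_of_reachable {L : Finset (Sym2 V)} {x y : V}
    (h : (SimpleGraph.fromEdgeSet (↑L : Set (Sym2 V))).Reachable x y) :
    comp L x = comp L y := by
  ext z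
  simp only [mem_comp']
  exact ⟨fun hx => h.symm.trans hx, fun hy => h.trans hy⟩

lemma mem_comps_of_mem {L : Finset (Sym2 V)} {C : Finset V} {a : V}
    (hC : C ∈ comps L) (ha : a ∈ C) : a ∈ covered L ∧ C = comp L a := by
  obtain ⟨x, hx, rfl⟩ := Finset.mem_image.1 hC
  have hR : (SimpleGraph.fromEdgeSet (↑L : Set (Sym2 V))).Reachable x a := mem_comp'.1 ha
  constructor
  · by_cases hxa : x = a
    · exact hxa ▸ hx
    · exact reachable_covered hR hxa
  · exact comp_eq_of_reachable hR

lemma comps_biUnion (L : Finset (Sym2 V)) : (comps L).biUnion id = covered L := by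
  ext x
  simp only [Finset.mem_biUnion, id]
  constructor
  · rintro ⟨C, hC, hx⟩
    exact (mem_comps_of_mem hC hx).1
  · intro hx
    exact ⟨comp L x, Finset.mem_image_of_mem _ hx, self_mem_comp x⟩

lemma sum_card_comps (L : Finset (Sym2 V)) :
    ∑ C ∈ comps L, C.card = (covered L).card := by
  have hdisj : ∀ C ∈ comps L, ∀ D ∈ comps L, C ≠ D → Disjoint (id C) (id D) := by
    intro C hC D hD hne
    simp only [id]
    rw [Finset.disjoint_left]
    intro a haC haD
    exact hne ((mem_comps_of_mem hC haC).2.trans (mem_comps_of_mem hD haD).2.symm)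
  rw [← comps_biUnion L, Finset.card_biUnion hdisj]
  rfl

lemma comps_nonempty {L : Finset (Sym2 V)} {C : Finset V} (hC : C ∈ comps L) :
    C ≠ ∅ := by
  obtain ⟨x, hx, rfl⟩ := Finset.mem_image.1 hC
  exact Finset.ne_empty_of_mem (self_mem_comp x)

lemma linkGame_va_eq (L : Finset (Sym2 V)) :
    linkGame va L = 2 * ((covered L).card : ℝ) - 2 * ((comps L).card : ℝ) := by
  unfold linkGame
  have h : ∀ C ∈ comps L, va C = 2 * (C.card : ℝ) - 2 := by
    intro C hC
    simp only [va, if_neg (comps_nonempty hC)]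
    ring
  rw [Finset.sum_congr rfl h, Finset.sum_sub_distrib, ← Finset.mul_sum]
  have : ∑ C ∈ comps L, (C.card : ℝ) = ((covered L).card : ℝ) := by
    rw [← sum_card_comps L]
    push_cast
    ring
  rw [this, Finset.sum_const, Finset.card_eq_sum_ones]
  push_cast
  ring

/-- Abbreviation for the graph of an edge finset. -/
abbrev egraph (L : Finset (Sym2 V)) : SimpleGraph V :=
  SimpleGraph.fromEdgeSet (↑L : Set (Sym2 V))

lemma reach_insert {L : Finset (Sym2 V)} {a b : V} (hab : a ≠ b) (x y : V) :
    (egraph (insert s(a,b) L)).Reachable x y ↔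
      (egraph L).Reachable x y ∨ ((egraph L).Reachable x a ∧ (egraph L).Reachable b y) ∨
        ((egraph L).Reachable x b ∧ (egraph L).Reachable a y) := by
  have hmono : egraph L ≤ egraph (insert s(a,b) L) := by
    apply SimpleGraph.fromEdgeSet_mono
    rw [Finset.coe_insert]
    exact Set.subset_insert _ _
  have hGab : (egraph (insert s(a,b) L)).Adj a b :=
    (SimpleGraph.fromEdgeSet_adj _).2 ⟨by simp, hab⟩
  constructor
  · rintro ⟨w⟩
    induction w with
    | nil => exact Or.inl (SimpleGraph.Reachable.refl _)
    | @cons u c _ h p ih =>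
        obtain ⟨hm, hne⟩ := (SimpleGraph.fromEdgeSet_adj _).1 h
        rw [Finset.coe_insert, Set.mem_insert_iff] at hm
        rcases hm with hm | hm
        · rw [Sym2.eq_iff] at hm
          rcases hm with ⟨rfl, rfl⟩ | ⟨rfl, rfl⟩
          · rcases ih with h1 | ⟨h1, h2⟩ | ⟨h1, h2⟩
            · exact Or.inr (Or.inl ⟨SimpleGraph.Reachable.refl _, h1⟩)
            · exact Or.inr (Or.inl ⟨SimpleGraph.Reachable.refl _, h2⟩)
            · exact Or.inl h2
          · rcases ih with h1 | ⟨h1, h2⟩ | ⟨h1, h2⟩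
            · exact Or.inr (Or.inr ⟨SimpleGraph.Reachable.refl _, h1⟩)
            · exact Or.inl h2
            · exact Or.inr (Or.inr ⟨SimpleGraph.Reachable.refl _, h2⟩)
        · have hadj : (egraph L).Adj u c := (SimpleGraph.fromEdgeSet_adj _).2 ⟨hm, hne⟩
          rcases ih with h1 | ⟨h1, h2⟩ | ⟨h1, h2⟩
          · exact Or.inl (hadj.reachable.trans h1)
          · exact Or.inr (Or.inl ⟨hadj.reachable.trans h1, h2⟩)
          · exact Or.inr (Or.inr ⟨hadj.reachable.trans h1, h2⟩)
  · rintro (h1 | ⟨h1, h2⟩ | ⟨h1, h2⟩)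
    · exact h1.mono hmono
    · exact ((h1.mono hmono).trans hGab.reachable).trans (h2.mono hmono)
    · exact ((h1.mono hmono).trans hGab.symm.reachable).trans (h2.mono hmono)

lemma covered_insert {L : Finset (Sym2 V)} {a b : V} :
    covered (insert s(a,b) L) = insert a (insert b (covered L)) := by
  ext x
  simp only [mem_covered', Finset.mem_insert]
  constructor
  · rintro ⟨e, he, hx⟩
    rcases he with rfl | he
    · rcases Sym2.mem_iff.1 hx with rfl | rfl
      · exact Or.inl rfl
      · exact Or.inr (Or.inl rfl)
    · exact Or.inr (Or.inr ⟨e, he, hx⟩)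
  · rintro (rfl | rfl | ⟨e, he, hx⟩)
    · exact ⟨s(x, b), Or.inl rfl, Sym2.mem_mk_left _ _⟩
    · exact ⟨s(a, x), Or.inl rfl, Sym2.mem_mk_right _ _⟩
    · exact ⟨e, Or.inr he, hx⟩

lemma comp_insert_of_not_reach_s14 {L : Finset (Sym2 V)} {a b x : V} (hab : a ≠ b)
    (hxa : ¬ (egraph L).Reachable x a) (hxb : ¬ (egraph L).Reachable x b) :
    comp (insert s(a,b) L) x = comp L x := by
  ext z
  rw [mem_comp', mem_comp', reach_insert hab]
  constructor
  · rintro (h | ⟨h1, _⟩ | ⟨h1, _⟩)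
    · exact h
    · exact absurd h1 hxa
    · exact absurd h1 hxb
  · exact Or.inl

lemma marginal_va {L : Finset (Sym2 V)} {a b : V} (hab : a ≠ b) :
    linkGame va (insert s(a,b) L) - linkGame va L =
      if (egraph L).Reachable a b then 0 else 2 := by
  have hmono : egraph L ≤ egraph (insert s(a,b) L) := by
    apply SimpleGraph.fromEdgeSet_mono
    rw [Finset.coe_insert]
    exact Set.subset_insert _ _
  split_ifs with hr
  · have hcov : covered (insert s(a,b) L) = covered L := by
      rw [covered_insert]
      rw [Finset.insert_eq_self.2, Finset.insert_eq_self.2]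
      · exact reachable_covered hr hab
      · rw [Finset.insert_eq_self.2 (reachable_covered hr hab)]
        exact reachable_covered hr.symm hab.symm
    have hcomp : ∀ x : V, comp (insert s(a,b) L) x = comp L x := by
      intro x
      ext z
      rw [mem_comp', mem_comp', reach_insert hab]
      constructor
      · rintro (h | ⟨h1, h2⟩ | ⟨h1, h2⟩)
        · exact h
        · exact (h1.trans hr).trans h2
        · exact (h1.trans hr.symm).trans h2
      · exact Or.inl
    have hcs : comps (insert s(a,b) L) = comps L := by
      unfold comps
      rw [hcov]
      exact Finset.image_congr fun x _ => hcomp x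
    unfold linkGame
    rw [hcs]
    ring
  · set S0 : Finset (Finset V) := (comps L).filter (fun C => a ∉ C ∧ b ∉ C) with hS0
    set D : Finset V := comp (insert s(a,b) L) a with hD
    have hGba : (egraph (insert s(a,b) L)).Reachable b a := by
      rw [reach_insert hab]
      exact Or.inr (Or.inr ⟨SimpleGraph.Reachable.refl _, SimpleGraph.Reachable.refl _⟩)
    have hcomps' : comps (insert s(a,b) L) = insert D S0 := by
      ext C
      constructor
      · intro hC
        obtain ⟨x, hx, rfl⟩ := Finset.mem_image.1 hC
        by_cases hxa : (egraph (insert s(a,b) L)).Reachable x a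
        · exact Finset.mem_insert.2 (Or.inl (comp_eq_of_reachable hxa))
        · have hxb' : ¬ (egraph L).Reachable x b := fun h =>
            hxa ((h.mono hmono).trans hGba)
          have hxa' : ¬ (egraph L).Reachable x a := fun h => hxa (h.mono hmono)
          have hxcov : x ∈ covered L := by
            rw [covered_insert] at hx
            rcases Finset.mem_insert.1 hx with rfl | hx
            · exact absurd (SimpleGraph.Reachable.refl _) hxa
            · rcases Finset.mem_insert.1 hx with rfl | hx
              · exact absurd hGba hxa
              · exact hx
          rw [comp_insert_of_not_reach_s14 hab hxa' hxb']
          refine Finset.mem_insert.2 (Or.inr (Finset.mem_filter.2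
            ⟨Finset.mem_image_of_mem _ hxcov, ?_, ?_⟩))
          · exact fun h => hxa' (mem_comp'.1 h)
          · exact fun h => hxb' (mem_comp'.1 h)
      · intro hC
        rcases Finset.mem_insert.1 hC with rfl | hC
        · exact Finset.mem_image_of_mem _ (by
            rw [covered_insert]; exact Finset.mem_insert_self _ _)
        · obtain ⟨hCc, hna, hnb⟩ := Finset.mem_filter.1 hC
          obtain ⟨x, hx, rfl⟩ := Finset.mem_image.1 hCc
          have hxa : ¬ (egraph L).Reachable x a := fun h => hna (mem_comp'.2 h)
          have hxb : ¬ (egraph L).Reachable x b := fun h => hnb (mem_comp'.2 h)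
          rw [← comp_insert_of_not_reach_s14 hab hxa hxb]
          exact Finset.mem_image_of_mem _ (by
            rw [covered_insert]
            exact Finset.mem_insert_of_mem (Finset.mem_insert_of_mem hx))
    have hDnotS0 : D ∉ S0 := fun h => (Finset.mem_filter.1 h).2.1 (self_mem_comp a)
    have hcard' : (comps (insert s(a,b) L)).card = S0.card + 1 := by
      rw [hcomps', Finset.card_insert_of_notMem hDnotS0]
    have hsplit : (comps L).card = S0.card +
        ((comps L).filter (fun C => a ∈ C ∨ b ∈ C)).card := by
      have h1 := Finset.card_filter_add_card_filter_not
        (s := comps L) (p := fun C => a ∈ C ∨ b ∈ C)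
      have h2 : (comps L).filter (fun C => ¬ (a ∈ C ∨ b ∈ C)) = S0 := by
        apply Finset.filter_congr
        intro C _
        push_neg
        rfl
      rw [h2] at h1
      omega
    have hmemT : ∀ C : Finset V, (C ∈ comps L ∧ (a ∈ C ∨ b ∈ C)) ↔
        ((a ∈ covered L ∧ C = comp L a) ∨ (b ∈ covered L ∧ C = comp L b)) := by
      intro C
      constructor
      · rintro ⟨hCc, h | h⟩
        · exact Or.inl ⟨(mem_comps_of_mem hCc h).1, (mem_comps_of_mem hCc h).2⟩
        · exact Or.inr ⟨(mem_comps_of_mem hCc h).1, (mem_comps_of_mem hCc h).2⟩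
      · rintro (⟨hc, rfl⟩ | ⟨hc, rfl⟩)
        · exact ⟨Finset.mem_image_of_mem _ hc, Or.inl (self_mem_comp a)⟩
        · exact ⟨Finset.mem_image_of_mem _ hc, Or.inr (self_mem_comp b)⟩
    have hne : comp L a ≠ comp L b := by
      intro h
      exact hr (mem_comp'.1 (h ▸ self_mem_comp b))
    have hT : ((comps L).filter (fun C => a ∈ C ∨ b ∈ C)).card =
        (if a ∈ covered L then 1 else 0) + (if b ∈ covered L then 1 else 0) := by
      by_cases ha : a ∈ covered L <;> by_cases hb : b ∈ covered L
      · have he : (comps L).filter (fun C => a ∈ C ∨ b ∈ C) = {comp L a, comp L b} := by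
          ext C
          rw [Finset.mem_filter, hmemT]
          simp [ha, hb]
        rw [he, Finset.card_pair hne, if_pos ha, if_pos hb]
      · have he : (comps L).filter (fun C => a ∈ C ∨ b ∈ C) = {comp L a} := by
          ext C
          rw [Finset.mem_filter, hmemT]
          simp [ha, hb]
        rw [he, Finset.card_singleton, if_pos ha, if_neg hb]
      · have he : (comps L).filter (fun C => a ∈ C ∨ b ∈ C) = {comp L b} := by
          ext C
          rw [Finset.mem_filter, hmemT]
          simp [ha, hb]
        rw [he, Finset.card_singleton, if_neg ha, if_pos hb]
      · have he : (comps L).filter (fun C => a ∈ C ∨ b ∈ C) = ∅ := by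
          ext C
          rw [Finset.mem_filter, hmemT]
          simp [ha, hb]
        rw [he, Finset.card_empty, if_neg ha, if_neg hb]
    have hcovcard : (covered (insert s(a,b) L)).card =
        (covered L).card + (if a ∈ covered L then 0 else 1) +
          (if b ∈ covered L then 0 else 1) := by
      rw [covered_insert]
      by_cases ha : a ∈ covered L <;> by_cases hb : b ∈ covered L
      · rw [Finset.insert_eq_self.2 hb, Finset.insert_eq_self.2 ha, if_pos ha, if_pos hb]
        omega
      · rw [Finset.insert_eq_self.2 (Finset.mem_insert_of_mem ha),
          Finset.card_insert_of_notMem hb, if_pos ha, if_neg hb]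
      · rw [Finset.insert_eq_self.2 hb, Finset.card_insert_of_notMem ha,
          if_neg ha, if_pos hb]
      · have hano : a ∉ insert b (covered L) :=
          fun h => (Finset.mem_insert.1 h).elim hab ha
        rw [Finset.card_insert_of_notMem hano, Finset.card_insert_of_notMem hb,
          if_neg ha, if_neg hb]
    rw [linkGame_va_eq, linkGame_va_eq, hcard', hsplit, hT, hcovcard]
    by_cases ha : a ∈ covered L <;> by_cases hb : b ∈ covered L <;>
      simp only [ha, hb, if_pos, if_neg, if_true, if_false] <;> push_cast <;> ring

lemma coeff_identity_s14 (s m : ℕ) :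
    ((s.factorial : ℝ) * ((m+1).factorial : ℝ)) / (((s+m+2)).factorial : ℝ)
      + (((s+1).factorial : ℝ) * (m.factorial : ℝ)) / (((s+m+2)).factorial : ℝ)
    = ((s.factorial : ℝ) * (m.factorial : ℝ)) / (((s+m+1)).factorial : ℝ) := by
  have hm : (((m+1).factorial : ℕ) : ℝ) = ((m:ℝ)+1) * (m.factorial : ℝ) := by
    rw [Nat.factorial_succ]; push_cast; ring
  have hs : (((s+1).factorial : ℕ) : ℝ) = ((s:ℝ)+1) * (s.factorial : ℝ) := by
    rw [Nat.factorial_succ]; push_cast; ring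
  have hn : (((s+m+2).factorial : ℕ) : ℝ) =
      ((s:ℝ)+(m:ℝ)+2) * ((s+m+1).factorial : ℝ) := by
    have h : s+m+2 = (s+m+1)+1 := rfl
    rw [h, Nat.factorial_succ]; push_cast; ring
  rw [hm, hs, hn]
  have h0 : (((s+m+1).factorial : ℕ) : ℝ) ≠ 0 := Nat.cast_ne_zero.2 (Nat.factorial_ne_zero _)
  have h2 : ((s:ℝ)+(m:ℝ)+2) ≠ 0 := by positivity
  field_simp
  ring

lemma shapley_mono_s14 {E : Finset (Sym2 V)} {e e0 : Sym2 V}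
    (he : e ∈ E) (hed : ¬ e.IsDiag) (he0 : e0 ∉ E) :
    shapley (insert e0 E) (linkGame va) e ≤ shapley E (linkGame va) e := by
  induction e using Sym2.ind with
  | _ a b =>
  have hab : a ≠ b := by simpa using hed
  have hee0 : e0 ≠ s(a,b) := fun h => he0 (h ▸ he)
  have herase : (insert e0 E).erase s(a,b) = insert e0 (E.erase s(a,b)) :=
    Finset.erase_insert_of_ne hee0
  have he0erase : e0 ∉ E.erase s(a,b) := fun h => he0 (Finset.mem_of_mem_erase h)
  have hcard : (insert e0 E).card = E.card + 1 := Finset.card_insert_of_notMem he0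
  have hantitone : ∀ L : Finset (Sym2 V),
      linkGame va (insert s(a,b) (insert e0 L)) - linkGame va (insert e0 L) ≤
      linkGame va (insert s(a,b) L) - linkGame va L := by
    intro L
    rw [marginal_va hab, marginal_va hab]
    have hm : (egraph L).Reachable a b → (egraph (insert e0 L)).Reachable a b := by
      intro h
      refine h.mono (SimpleGraph.fromEdgeSet_mono ?_)
      rw [Finset.coe_insert]
      exact Set.subset_insert _ _
    by_cases h2 : (egraph L).Reachable a b
    · rw [if_pos (hm h2), if_pos h2]
    · rw [if_neg h2]
      split_ifs <;> norm_num
  have hdisj : Disjoint (E.erase s(a,b)).powerset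
      ((E.erase s(a,b)).powerset.image (insert e0)) := by
    rw [Finset.disjoint_left]
    rintro L hL hL2
    obtain ⟨M, _, rfl⟩ := Finset.mem_image.1 hL2
    exact he0erase (Finset.mem_powerset.1 hL (Finset.mem_insert_self _ _))
  have hinj : ∀ x ∈ (E.erase s(a,b)).powerset, ∀ y ∈ (E.erase s(a,b)).powerset,
      insert e0 x = insert e0 y → x = y := by
    intro x hx y hy hxy
    have hx0 : e0 ∉ x := fun h => he0erase (Finset.mem_powerset.1 hx h)
    have hy0 : e0 ∉ y := fun h => he0erase (Finset.mem_powerset.1 hy h)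
    rw [← Finset.erase_insert hx0, hxy, Finset.erase_insert hy0]
  rw [shapley, shapley, herase, Finset.powerset_insert, Finset.sum_union hdisj,
    Finset.sum_image hinj, ← Finset.sum_add_distrib]
  apply Finset.sum_le_sum
  intro L hL
  have hsub : L ⊆ E.erase s(a,b) := Finset.mem_powerset.1 hL
  have hLe0 : e0 ∉ L := fun h => he0erase (hsub h)
  have hcardL : L.card ≤ E.card - 1 := by
    have := Finset.card_le_card hsub
    rwa [Finset.card_erase_of_mem he] at this
  have hE1 : 1 ≤ E.card := Finset.card_pos.2 ⟨_, he⟩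
  set m : ℕ := E.card - 1 - L.card with hmdef
  have h1 : (insert e0 E).card - L.card - 1 = m + 1 := by rw [hcard]; omega
  have h2 : (insert e0 E).card - (insert e0 L).card - 1 = m := by
    rw [hcard, Finset.card_insert_of_notMem hLe0]; omega
  have h3 : E.card - L.card - 1 = m := by omega
  have h4 : (insert e0 E).card = L.card + m + 2 := by rw [hcard]; omega
  have h5 : E.card = L.card + m + 1 := by omega
  rw [h1, h2, h3, Finset.card_insert_of_notMem hLe0, h4, h5]
  have hkey := coeff_identity_s14 L.card m
  rw [← hkey, add_mul]
  refine add_le_add_right ?_ _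
  refine mul_le_mul_of_nonneg_left (hantitone L) ?_
  positivity


/-- adding an edge never increases the position attachment centrality
of a node which is not an endpoint of the new edge. -/
theorem PA_nonendpoint_not_increased (E : Finset (Sym2 V)) (hE : SimpleEdges E)
    (i₀ j₀ : V) (hne : i₀ ≠ j₀) (hnotmem : s(i₀, j₀) ∉ E)
    (i : V) (hi : i ≠ i₀) (hj : i ≠ j₀) :
    positionValue va (insert s(i₀, j₀) E) i ≤ positionValue va E i := by
  unfold positionValue
  have hfilter : (insert s(i₀,j₀) E).filter (fun e => i ∈ e) = E.filter (fun e => i ∈ e) := by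
    rw [Finset.filter_insert, if_neg]
    rw [Sym2.mem_iff]
    push_neg
    exact ⟨hi, hj⟩
  rw [hfilter]
  have h12 : (0:ℝ) ≤ 1/2 := by norm_num
  refine mul_le_mul_of_nonneg_left ?_ h12
  apply Finset.sum_le_sum
  intro e heF
  obtain ⟨heE, _⟩ := Finset.mem_filter.1 heF
  exact shapley_mono_s14 heE (hE e heE) hnotmem


end
end

section
/- Let Γ=(N,E), add edge e₀={i₀,j₀}, and let Bet_Γ({i₀,j₀}) be the set of intermediary nodes of {i₀,j₀}, i.e., nodes (other than i₀,j₀) incident to an edge of some minimal edge set connecting i₀ and j₀ in Γ. Then for every node i ∉ Bet_Γ({i₀,j₀}) ∪ {i₀,j₀}, the position attachment centrality is unchanged: PA_i(N, E∪{e₀}) = PA_i(N, E). -/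
open scoped Classical

noncomputable section

variable {V : Type*} [Fintype V] [DecidableEq V]

/-- `Γ_L` connects the pair `a, b`. -/
def ConnectsPair (L : Finset (Sym2 V)) (a b : V) : Prop :=
  (SimpleGraph.fromEdgeSet (↑L : Set (Sym2 V))).Reachable a b

/-- `L` is the edge set of a minimal `{a,b}`-connecting edge-induced subgraph of
`(N, E)`. -/
def MinimalConnecting (E : Finset (Sym2 V)) (a b : V) (L : Finset (Sym2 V)) : Prop :=
  L ⊆ E ∧ ConnectsPair L a b ∧ ∀ L' ⊂ L, ¬ ConnectsPair L' a b

/-- `i` is an intermediary of the pair `{a, b}` in `(N, E)`. -/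
def Bet (E : Finset (Sym2 V)) (a b : V) (i : V) : Prop :=
  i ≠ a ∧ i ≠ b ∧ ∃ L : Finset (Sym2 V),
    MinimalConnecting E a b L ∧ ∃ e ∈ L, i ∈ e

set_option linter.unusedSectionVars false

namespace PAaux

abbrev G (L : Finset (Sym2 V)) : SimpleGraph V := SimpleGraph.fromEdgeSet (↑L : Set (Sym2 V))

lemma reach_mono {L M : Finset (Sym2 V)} (h : L ⊆ M) {x y : V} (hr : (G L).Reachable x y) :
    (G M).Reachable x y :=
  hr.mono (SimpleGraph.fromEdgeSet_mono (Finset.coe_subset.mpr h))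

lemma adj_iff {L : Finset (Sym2 V)} {x y : V} : (G L).Adj x y ↔ s(x,y) ∈ L ∧ x ≠ y := by
  simp [G]

lemma reach_of_mem {L : Finset (Sym2 V)} {x y : V} (h : s(x,y) ∈ L) (hxy : x ≠ y) :
    (G L).Reachable x y :=
  (adj_iff.mpr ⟨h, hxy⟩).reachable

lemma start_covered {L : Finset (Sym2 V)} {x y : V} (h : (G L).Reachable x y) (hxy : x ≠ y) :
    x ∈ covered L := by
  obtain ⟨w⟩ := h
  cases w with
  | nil => exact absurd rfl hxy
  | @cons _ z _ h p =>
    rw [adj_iff] at h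
    simp only [covered, Finset.mem_filter, Finset.mem_univ, true_and]
    exact ⟨s(x,z), h.1, by simp⟩

lemma end_covered {L : Finset (Sym2 V)} {x y : V} (h : (G L).Reachable x y) (hxy : x ≠ y) :
    y ∈ covered L := start_covered h.symm (Ne.symm hxy)

lemma key_step {L : Finset (Sym2 V)} {a b : V} (u z y : V) (hm : s(u,z) = s(a,b))
    (hzy : (G L).Reachable z y ∨ ((G L).Reachable z a ∧ (G L).Reachable b y) ∨
      ((G L).Reachable z b ∧ (G L).Reachable a y)) :
    (G L).Reachable u y ∨ ((G L).Reachable u a ∧ (G L).Reachable b y) ∨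
      ((G L).Reachable u b ∧ (G L).Reachable a y) := by
  rw [Sym2.eq_iff] at hm
  rcases hm with ⟨rfl, rfl⟩ | ⟨rfl, rfl⟩
  · rcases hzy with h1 | ⟨h1, h2⟩ | ⟨h1, h2⟩
    · exact Or.inr (Or.inl ⟨SimpleGraph.Reachable.refl _, h1⟩)
    · exact Or.inl (h1.symm.trans h2)
    · exact Or.inl h2
  · rcases hzy with h1 | ⟨h1, h2⟩ | ⟨h1, h2⟩
    · exact Or.inr (Or.inr ⟨SimpleGraph.Reachable.refl _, h1⟩)
    · exact Or.inl h2
    · exact Or.inl (h1.symm.trans h2)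

lemma reach_insert {a b : V} (hab : a ≠ b) (L : Finset (Sym2 V)) (x y : V) :
    (G (insert s(a,b) L)).Reachable x y ↔
      (G L).Reachable x y ∨ ((G L).Reachable x a ∧ (G L).Reachable b y) ∨
      ((G L).Reachable x b ∧ (G L).Reachable a y) := by
  constructor
  · intro ⟨w⟩
    induction w with
    | nil => exact Or.inl (SimpleGraph.Reachable.refl _)
    | @cons u z _ h p ih =>
      rw [adj_iff, Finset.mem_insert] at h
      obtain ⟨hm | hm, huz⟩ := h
      · exact key_step u z _ hm ih
      · have hr : (G L).Reachable u z := reach_of_mem hm huz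
        rcases ih with h1 | ⟨h1, h2⟩ | ⟨h1, h2⟩
        · exact Or.inl (hr.trans h1)
        · exact Or.inr (Or.inl ⟨hr.trans h1, h2⟩)
        · exact Or.inr (Or.inr ⟨hr.trans h1, h2⟩)

  · rintro (h | ⟨h1, h2⟩ | ⟨h1, h2⟩)
    · exact reach_mono (Finset.subset_insert _ _) h
    · exact ((reach_mono (Finset.subset_insert _ _) h1).trans
        (reach_of_mem (Finset.mem_insert_self _ _) hab)).trans
        (reach_mono (Finset.subset_insert _ _) h2)
    · exact ((reach_mono (Finset.subset_insert _ _) h1).trans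
        (reach_of_mem (Finset.mem_insert_self _ _) hab).symm).trans
        (reach_mono (Finset.subset_insert _ _) h2)

lemma mem_comp {L : Finset (Sym2 V)} {i j : V} : j ∈ comp L i ↔ (G L).Reachable i j := by
  simp [comp, G]

lemma comp_subset_covered {L : Finset (Sym2 V)} {i : V} (hi : i ∈ covered L) :
    comp L i ⊆ covered L := by
  intro j hj
  rw [mem_comp] at hj
  by_cases hij : i = j
  · exact hij ▸ hi
  · exact end_covered hj hij

lemma mem_comps {L : Finset (Sym2 V)} {C : Finset V} :
    C ∈ comps L ↔ ∃ i ∈ covered L, comp L i = C := by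
  simp [comps]

lemma comp_eq_of_mem {L : Finset (Sym2 V)} {i j : V} (h : j ∈ comp L i) :
    comp L i = comp L j := by
  rw [mem_comp] at h
  ext k
  rw [mem_comp, mem_comp]
  exact ⟨fun hk => h.symm.trans hk, fun hk => h.trans hk⟩

lemma comps_disjoint {L : Finset (Sym2 V)} :
    ∀ C ∈ comps L, ∀ D ∈ comps L, C ≠ D → Disjoint C D := by
  intro C hC D hD hne
  obtain ⟨i, _, rfl⟩ := mem_comps.mp hC
  obtain ⟨j, _, rfl⟩ := mem_comps.mp hD
  rw [Finset.disjoint_left]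
  intro x hxC hxD
  exact hne ((comp_eq_of_mem hxC).trans (comp_eq_of_mem hxD).symm)

lemma comps_nonempty {L : Finset (Sym2 V)} {C : Finset V} (hC : C ∈ comps L) : C.Nonempty := by
  obtain ⟨i, _, rfl⟩ := mem_comps.mp hC
  exact ⟨i, mem_comp.mpr (SimpleGraph.Reachable.refl _)⟩

section Order
variable [LinearOrder V]

/-- The set of non-minimal vertices of components. -/
def T (L : Finset (Sym2 V)) : Finset V :=
  Finset.univ.filter fun j => ∃ k, k < j ∧ (G L).Reachable k j

lemma mem_T {L : Finset (Sym2 V)} {j : V} :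
    j ∈ T L ↔ ∃ k, k < j ∧ (G L).Reachable k j := by simp [T]

lemma T_eq_biUnion {L : Finset (Sym2 V)} :
    T L = (comps L).biUnion (fun C => C.filter fun j => ∃ k ∈ C, k < j) := by
  ext j
  rw [mem_T, Finset.mem_biUnion]
  constructor
  · rintro ⟨k, hkj, hR⟩
    have hkj' : k ≠ j := ne_of_lt hkj
    have hjc : j ∈ covered L := end_covered hR hkj'
    refine ⟨comp L j, mem_comps.mpr ⟨j, hjc, rfl⟩, ?_⟩
    rw [Finset.mem_filter]
    exact ⟨mem_comp.mpr (SimpleGraph.Reachable.refl _),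
      k, mem_comp.mpr hR.symm, hkj⟩
  · rintro ⟨C, hC, hj⟩
    rw [Finset.mem_filter] at hj
    obtain ⟨hjC, k, hkC, hkj⟩ := hj
    obtain ⟨i, _, rfl⟩ := mem_comps.mp hC
    exact ⟨k, hkj, (mem_comp.mp hkC).symm.trans (mem_comp.mp hjC)⟩

lemma filter_eq_erase_min {C : Finset V} (hC : C.Nonempty) :
    (C.filter fun j => ∃ k ∈ C, k < j) = C.erase (C.min' hC) := by
  ext j
  rw [Finset.mem_filter, Finset.mem_erase]
  constructor
  · rintro ⟨hjC, k, hkC, hkj⟩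
    exact ⟨fun h => absurd (h ▸ Finset.min'_le C k hkC) (not_le.mpr hkj), hjC⟩
  · rintro ⟨hne, hjC⟩
    exact ⟨hjC, C.min' hC, C.min'_mem hC,
      lt_of_le_of_ne (Finset.min'_le C j hjC) (Ne.symm hne)⟩

lemma card_T {L : Finset (Sym2 V)} :
    linkGame va L = 2 * ((T L).card : ℝ) := by
  rw [T_eq_biUnion, Finset.card_biUnion]
  · rw [linkGame]
    rw [Nat.cast_sum]
    rw [Finset.mul_sum]
    refine Finset.sum_congr rfl fun C hC => ?_
    have hne := comps_nonempty hC
    rw [filter_eq_erase_min hne, Finset.card_erase_of_mem (C.min'_mem hne)]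
    rw [va, if_neg (Finset.nonempty_iff_ne_empty.mp hne)]
    have : 1 ≤ C.card := Finset.card_pos.mpr hne
    rw [Nat.cast_sub this]
    push_cast
    ring
  · intro C hC D hD hne
    exact (comps_disjoint C hC D hD hne).mono
      (Finset.filter_subset _ _) (Finset.filter_subset _ _)

lemma T_insert_of_reach {L : Finset (Sym2 V)} {a b : V} (hab : a ≠ b)
    (h : (G L).Reachable a b) : T (insert s(a,b) L) = T L := by
  ext j
  rw [mem_T, mem_T]
  constructor
  · rintro ⟨k, hkj, hR⟩
    rcases (reach_insert hab L k j).mp hR with h1 | ⟨h1, h2⟩ | ⟨h1, h2⟩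
    · exact ⟨k, hkj, h1⟩
    · exact ⟨k, hkj, (h1.trans h.symm.symm).trans (h.symm.trans (h.trans h2))⟩
    · exact ⟨k, hkj, (h1.trans h.symm).trans (h.trans (h.symm.trans h2))⟩
  · rintro ⟨k, hkj, hR⟩
    exact ⟨k, hkj, reach_mono (Finset.subset_insert _ _) hR⟩

lemma T_insert_aux {L : Finset (Sym2 V)} {a b mA mB : V} (hab : a ≠ b)
    (h : ¬ (G L).Reachable a b)
    (hmA : (G L).Reachable mA a) (hmB : (G L).Reachable mB b)
    (hminA : ∀ k, (G L).Reachable k a → mA ≤ k)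
    (hminB : ∀ k, (G L).Reachable k b → mB ≤ k)
    (hlt : mA < mB) :
    mB ∉ T L ∧ T (insert s(a,b) L) = insert mB (T L) := by
  have hmBT : mB ∉ T L := by
    rw [mem_T]
    rintro ⟨k, hk, hR⟩
    exact absurd (hminB k (hR.trans hmB)) (not_le.mpr hk)
  refine ⟨hmBT, ?_⟩
  ext j
  rw [mem_T, Finset.mem_insert, mem_T]
  constructor
  · rintro ⟨k, hkj, hR⟩
    rcases (reach_insert hab L k j).mp hR with h1 | ⟨h1, h2⟩ | ⟨h1, h2⟩
    · exact Or.inr ⟨k, hkj, h1⟩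
    · -- k ~ a, b ~ j : j is in the b-class
      by_cases hj : j = mB
      · exact Or.inl hj
      · have hle : mB ≤ j := hminB j h2.symm
        exact Or.inr ⟨mB, lt_of_le_of_ne hle (Ne.symm hj), hmB.trans h2⟩
    · -- k ~ b, a ~ j : k is in the b-class, so mA < mB ≤ k < j
      have hk : mB ≤ k := hminB k h1
      exact Or.inr ⟨mA, lt_of_lt_of_le (lt_of_lt_of_le hlt hk) (le_of_lt hkj), hmA.trans h2⟩
  · rintro (rfl | ⟨k, hkj, hR⟩)
    · exact ⟨mA, hlt, (reach_insert hab L mA j).mpr (Or.inr (Or.inl ⟨hmA, hmB.symm⟩))⟩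
    · exact ⟨k, hkj, reach_mono (Finset.subset_insert _ _) hR⟩

lemma T_insert_of_not_reach {L : Finset (Sym2 V)} {a b : V} (hab : a ≠ b)
    (h : ¬ (G L).Reachable a b) :
    ∃ j, j ∉ T L ∧ T (insert s(a,b) L) = insert j (T L) := by
  classical
  set A : Finset V := Finset.univ.filter (fun k => (G L).Reachable k a) with hA
  set B : Finset V := Finset.univ.filter (fun k => (G L).Reachable k b) with hB
  have hmemA : ∀ k, k ∈ A ↔ (G L).Reachable k a := fun k => by simp [hA]
  have hmemB : ∀ k, k ∈ B ↔ (G L).Reachable k b := fun k => by simp [hB]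
  have hAne : A.Nonempty := ⟨a, (hmemA a).mpr (SimpleGraph.Reachable.refl a)⟩
  have hBne : B.Nonempty := ⟨b, (hmemB b).mpr (SimpleGraph.Reachable.refl b)⟩
  set mA := A.min' hAne
  set mB := B.min' hBne
  have hRA : (G L).Reachable mA a := (hmemA _).mp (A.min'_mem hAne)
  have hRB : (G L).Reachable mB b := (hmemB _).mp (B.min'_mem hBne)
  have hminA : ∀ k, (G L).Reachable k a → mA ≤ k := fun k hk =>
    A.min'_le k ((hmemA k).mpr hk)
  have hminB : ∀ k, (G L).Reachable k b → mB ≤ k := fun k hk =>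
    B.min'_le k ((hmemB k).mpr hk)
  have hne : mA ≠ mB := fun he => h (hRA.symm.trans (he ▸ hRB))
  rcases lt_or_gt_of_ne hne with hlt | hlt
  · obtain ⟨h1, h2⟩ := T_insert_aux hab h hRA hRB hminA hminB hlt
    exact ⟨mB, h1, h2⟩
  · have h' : ¬ (G L).Reachable b a := fun hr => h hr.symm
    obtain ⟨h1, h2⟩ := T_insert_aux (Ne.symm hab) h' hRB hRA hminB hminA hlt
    rw [Sym2.eq_swap] at h2
    exact ⟨mA, h1, h2⟩

lemma linkGame_insert {L : Finset (Sym2 V)} {a b : V} (hab : a ≠ b) :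
    linkGame va (insert s(a,b) L) =
      linkGame va L + (if (G L).Reachable a b then 0 else 2) := by
  split_ifs with h
  · rw [card_T, card_T, T_insert_of_reach hab h]
    ring
  · obtain ⟨j, hj, hT⟩ := T_insert_of_not_reach hab h
    rw [card_T, card_T, hT, Finset.card_insert_of_notMem hj]
    push_cast
    ring

end Order

lemma linkGame_insert' {L : Finset (Sym2 V)} {a b : V} (hab : a ≠ b) :
    linkGame va (insert s(a,b) L) =
      linkGame va L + (if (G L).Reachable a b then 0 else 2) := by
  letI : LinearOrder V := LinearOrder.lift' (Fintype.equivFin V) (Fintype.equivFin V).injective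
  exact linkGame_insert hab

lemma exists_minimal (M : Finset (Sym2 V)) (a b : V) (h : ConnectsPair M a b) :
    ∃ M' ⊆ M, ConnectsPair M' a b ∧ ∀ M'' ⊂ M', ¬ ConnectsPair M'' a b := by
  classical
  set s : Finset (Finset (Sym2 V)) := M.powerset.filter (fun M' => ConnectsPair M' a b) with hs
  have hMs : M ∈ s := by simp [hs, h]
  obtain ⟨M', hM's, hmin⟩ := Finset.exists_min_image s Finset.card ⟨M, hMs⟩
  rw [hs, Finset.mem_filter, Finset.mem_powerset] at hM's
  refine ⟨M', hM's.1, hM's.2, fun M'' hss hc => ?_⟩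
  have hM''s : M'' ∈ s := by
    rw [hs, Finset.mem_filter, Finset.mem_powerset]
    exact ⟨(subset_of_ssubset hss).trans hM's.1, hc⟩
  exact absurd (hmin M'' hM''s) (not_le.mpr (Finset.card_lt_card hss))

/-- Key lemma: adding the edge `{i₀,j₀}` does not change whether the endpoints of
an edge `e` incident to a non-intermediary `i` are connected. -/
lemma reach_e0_iff {E : Finset (Sym2 V)} {i₀ j₀ i : V} (hne : i₀ ≠ j₀)
    (hi : i ≠ i₀) (hj : i ≠ j₀) (hbet : ¬ Bet E i₀ j₀ i)
    {e : Sym2 V} (he : e ∈ E) (hie : i ∈ e) {a b : V} (heab : e = s(a,b)) (hab : a ≠ b)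
    {L : Finset (Sym2 V)} (hL : L ⊆ E) :
    (G (insert s(i₀,j₀) L)).Reachable a b ↔ (G L).Reachable a b := by
  constructor
  · intro h'
    by_contra hnot
    have hEL : insert e L ⊆ E := Finset.insert_subset he hL
    have hadj : (G (insert e L)).Reachable a b :=
      reach_of_mem (heab ▸ Finset.mem_insert_self e L) hab
    rcases (reach_insert hne L a b).mp h' with h1 | ⟨h1, h2⟩ | ⟨h1, h2⟩
    · exact hnot h1
    · -- a ~ i₀ and j₀ ~ b in L
      have hconn : ConnectsPair (insert e L) i₀ j₀ :=
        ((reach_mono (Finset.subset_insert e L) h1).symm.trans hadj).trans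
          (reach_mono (Finset.subset_insert e L) h2).symm
      obtain ⟨M', hM'sub, hM'conn, hM'min⟩ := exists_minimal _ _ _ hconn
      have heM' : e ∈ M' := by
        by_contra heM'
        have hsubL : M' ⊆ L := fun x hx =>
          ((Finset.mem_insert.mp (hM'sub hx)).resolve_left (fun hx' => heM' (hx' ▸ hx)))
        have hI : (G L).Reachable i₀ j₀ := reach_mono hsubL hM'conn
        exact hnot (h1.trans (hI.trans h2))
      exact hbet ⟨hi, hj, M', ⟨hM'sub.trans hEL, hM'conn, hM'min⟩, e, heM', hie⟩
    · -- a ~ j₀ and i₀ ~ b in L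
      have hconn : ConnectsPair (insert e L) i₀ j₀ :=
        ((reach_mono (Finset.subset_insert e L) h2).trans hadj.symm).trans
          (reach_mono (Finset.subset_insert e L) h1)
      obtain ⟨M', hM'sub, hM'conn, hM'min⟩ := exists_minimal _ _ _ hconn
      have heM' : e ∈ M' := by
        by_contra heM'
        have hsubL : M' ⊆ L := fun x hx =>
          ((Finset.mem_insert.mp (hM'sub hx)).resolve_left (fun hx' => heM' (hx' ▸ hx)))
        have hI : (G L).Reachable i₀ j₀ := reach_mono hsubL hM'conn
        exact hnot (h1.trans (hI.symm.trans h2))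
      exact hbet ⟨hi, hj, M', ⟨hM'sub.trans hEL, hM'conn, hM'min⟩, e, heM', hie⟩
  · exact reach_mono (Finset.subset_insert _ _)

lemma coef_id (l d : ℕ) :
    ((l.factorial : ℝ) * ((d+1).factorial : ℝ) / (((l+d+2)).factorial : ℝ)) +
      (((l+1).factorial : ℝ) * (d.factorial : ℝ) / (((l+d+2)).factorial : ℝ)) =
    ((l.factorial : ℝ) * (d.factorial : ℝ) / (((l+d+1)).factorial : ℝ)) := by
  have h1 : ((l+d+2)).factorial = (l+d+2) * ((l+d+1)).factorial := rfl
  have h2 : (d+1).factorial = (d+1) * d.factorial := rfl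
  have h3 : (l+1).factorial = (l+1) * l.factorial := rfl
  have hpos : (((l+d+1)).factorial : ℝ) ≠ 0 := Nat.cast_ne_zero.mpr (Nat.factorial_ne_zero _)
  have hpos2 : ((l:ℝ)+(d:ℝ)+2) ≠ 0 := by positivity
  rw [h1, h2, h3]
  push_cast
  field_simp
  ring

lemma shapley_insert_eq {E : Finset (Sym2 V)} (hE : SimpleEdges E) {i₀ j₀ i : V}
    (hne : i₀ ≠ j₀) (hnotmem : s(i₀,j₀) ∉ E) (hi : i ≠ i₀) (hj : i ≠ j₀)
    (hbet : ¬ Bet E i₀ j₀ i) {e : Sym2 V} (he : e ∈ E) (hie : i ∈ e) :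
    shapley (insert s(i₀,j₀) E) (linkGame va) e = shapley E (linkGame va) e := by
  obtain ⟨a, b, rfl⟩ : ∃ a b, e = s(a, b) :=
    Sym2.inductionOn e (fun x y => ⟨x, y, rfl⟩)
  have hab : a ≠ b := fun h => hE _ he (Sym2.mk_isDiag_iff.mpr h)
  have hee0 : s(a,b) ≠ s(i₀,j₀) := fun h => hnotmem (h ▸ he)
  have herase : (insert s(i₀,j₀) E).erase s(a,b) = insert s(i₀,j₀) (E.erase s(a,b)) :=
    Finset.erase_insert_of_ne (Ne.symm hee0)
  have he0erase : s(i₀,j₀) ∉ E.erase s(a,b) := fun h => hnotmem (Finset.mem_of_mem_erase h)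
  have hcard : (insert s(i₀,j₀) E).card = E.card + 1 := Finset.card_insert_of_notMem hnotmem
  rw [shapley, shapley, herase, hcard, Finset.sum_powerset_insert he0erase,
    ← Finset.sum_add_distrib]
  refine Finset.sum_congr rfl fun L hL => ?_
  rw [Finset.mem_powerset] at hL
  have hLE : L ⊆ E := hL.trans (Finset.erase_subset _ _)
  have he0L : s(i₀,j₀) ∉ L := fun h => hnotmem (hLE h)
  have hcardL : (insert s(i₀,j₀) L).card = L.card + 1 := Finset.card_insert_of_notMem he0L
  have hlt : L.card < E.card :=
    Finset.card_lt_card (lt_of_le_of_lt (show L ≤ E.erase s(a,b) from hL) (Finset.erase_ssubset he))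
  set d := E.card - L.card - 1 with hd
  have hD1 : linkGame va (insert s(a,b) L) - linkGame va L =
      (if (G L).Reachable a b then 0 else 2) := by
    rw [linkGame_insert' hab]; ring
  have hiff := reach_e0_iff hne hi hj hbet he hie rfl hab hLE
  have hD2 : linkGame va (insert s(a,b) (insert s(i₀,j₀) L)) -
      linkGame va (insert s(i₀,j₀) L) = (if (G L).Reachable a b then 0 else 2) := by
    rw [linkGame_insert' hab]
    simp only [hiff]
    ring
  rw [hcardL, hD1, hD2]
  have h1 : E.card + 1 - L.card - 1 = d + 1 := by omega
  have h2 : E.card + 1 - (L.card + 1) - 1 = d := by omega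
  have h3 : E.card - L.card - 1 = d := by omega
  have h4 : E.card + 1 = L.card + d + 2 := by omega
  have h5 : E.card = L.card + d + 1 := by omega
  rw [h1, h2, h4]
  rw [h5]
  linear_combination (if (G L).Reachable a b then (0:ℝ) else 2) * coef_id L.card d

end PAaux

/-- adding the edge `{i₀, j₀}` leaves the position attachment
centrality of every node which is neither an endpoint nor an intermediary of
`{i₀, j₀}` unchanged. -/
theorem PA_nonintermediary_unchanged (E : Finset (Sym2 V)) (hE : SimpleEdges E)
    (i₀ j₀ : V) (hne : i₀ ≠ j₀) (hnotmem : s(i₀, j₀) ∉ E)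
    (i : V) (hi : i ≠ i₀) (hj : i ≠ j₀) (hbet : ¬ Bet E i₀ j₀ i) :
    positionValue va (insert s(i₀, j₀) E) i = positionValue va E i := by
  have hfilter : (insert s(i₀,j₀) E).filter (fun e => i ∈ e) = E.filter (fun e => i ∈ e) := by
    rw [Finset.filter_insert, if_neg]
    intro h
    rcases Sym2.mem_iff.mp h with h' | h'
    exacts [hi h', hj h']
  rw [positionValue, positionValue, hfilter]
  congr 1
  refine Finset.sum_congr rfl fun e heF => ?_
  rw [Finset.mem_filter] at heF
  exact PAaux.shapley_insert_eq hE hne hnotmem hi hj hbet heF.1 heF.2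

end
end
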